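/- arXiv:math/0407373 — 10 statements merged into one kernel-verified Lean document; each statement's English description precedes it below -/
import Mathlib

section
/- Let n ≥ 3 and let F be a family of subsets of {1,...,n} with ∅ ∉ F and {1,...,n} ∉ F, such that there are no four distinct members A, B, C, D ∈ F with A ∪ B ⊆ C ∩ D. Then Σ_{F∈F} 1/C(n,|F|) ≤ 2. -/
/-!
A permutation `σ` of `[n]` determines the maximal chain of its initial segments, and a uniformly
random `σ` passes through a fixed set `S` with probability `1 / C(n, |S|)`; so the sum to be bounded
is the expected number of members of `F` on the chain of `σ`, call it `c σ`. These members form a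
chain in `F`, and a butterfly-free family contains no chain of four sets, so `c σ ≤ 3`. As
`c σ ≤ 2 + [c σ = 3] - [c σ = 1]`, it suffices to show that `c σ = 3` is at most as likely as
`c σ = 1`. If `c σ = 3`, the middle set `B` of the three has, by butterfly-freeness, a unique
proper subset `A` and a unique proper superset `C` in `F`, so every chain through `B` meets `F`
inside `{A, B, C}`. Among the chains through `B`, at most half pass through `A` (a transposition
exchanging a point of `A` with one of `B \ A` preserves `B` and moves `A`, because `A ≠ ∅`), and
likewise at most half through `C` (as `C ≠ [n]`). Hence the chains through `A`, `B` and `C` are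
no more than those through `B` avoiding `A` and `C`, and the latter have `c σ = 1`.
-/

open Finset Equiv
open scoped Pointwise

namespace ButterflyLubell

lemma exists_perm_smul_eq {α : Type*} [DecidableEq α] {S T : Finset α} (h : #S = #T) :
    ∃ π : Perm α, π • S = T := by
  have := Set.powersetCard.isPretransitive (α := α) (n := #S)
  obtain ⟨π, hπ⟩ := MulAction.exists_smul_eq (Perm α) (⟨S, rfl⟩ : Set.powersetCard α #S) ⟨T, h.symm⟩
  exact ⟨π, by simpa using congrArg Subtype.val hπ⟩

lemma swap_smul_finset_eq_self {α : Type*} [DecidableEq α] {U : Finset α} {x y : α}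
    (h : x ∈ U ↔ y ∈ U) : swap x y • U = U := by
  ext z
  rw [← inv_smul_mem_iff, swap_inv, Perm.smul_def, swap_apply_def]
  split_ifs with hzx hzy <;> simp_all

lemma swap_smul_finset_ne {α : Type*} [DecidableEq α] {V : Finset α} {x y : α}
    (hx : x ∈ V) (hy : y ∉ V) : swap x y • V ≠ V := fun h =>
  hy (h ▸ by simpa using smul_mem_smul_finset (a := swap x y) hx)

lemma card_inter_le_card_sdiff_union {ι : Type*} [DecidableEq ι] {X Y T : Finset ι}
    (hX : X ⊆ T) (hY : Y ⊆ T) (hX2 : 2 * #X ≤ #T) (hY2 : 2 * #Y ≤ #T) :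
    #(X ∩ Y) ≤ #(T \ (X ∪ Y)) := by
  have := card_union_add_card_inter X Y
  rw [card_sdiff_of_subset (union_subset hX hY)]
  omega

lemma sum_le_two_mul_card {ι : Type*} {s : Finset ι} {f : ι → ℕ} (hf : ∀ i ∈ s, f i ≤ 3)
    (h : #{i ∈ s | f i = 3} ≤ #{i ∈ s | f i = 1}) : ∑ i ∈ s, f i ≤ 2 * #s := by
  have hpt : ∀ i ∈ s, f i + (if f i = 1 then 1 else 0) ≤ 2 + (if f i = 3 then 1 else 0) := by
    intro i hi
    have := hf i hi
    split_ifs <;> omega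
  have := sum_le_sum hpt
  rw [sum_add_distrib, sum_add_distrib, ← card_filter, ← card_filter, sum_const,
    smul_eq_mul] at this
  omega

lemma exists_strictMono_of_isChain {α : Type*} [DecidableEq α] {𝒢 : Finset (Finset α)}
    (h𝒢 : IsChain (· ⊆ ·) (𝒢 : Set (Finset α))) {m : ℕ} (hm : m ≤ #𝒢) :
    ∃ f : Fin m → Finset α, StrictMono f ∧ ∀ i, f i ∈ 𝒢 := by
  have hinj : Set.InjOn card (𝒢 : Set (Finset α)) := fun S hS T hT h => by
    rcases h𝒢.total hS hT with hST | hTS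
    · exact eq_of_subset_of_card_le hST h.ge
    · exact (eq_of_subset_of_card_le hTS h.le).symm
  set K := 𝒢.image card
  have hK : #K = #𝒢 := card_image_of_injOn hinj
  have hmem (i : Fin m) : ∃ S ∈ 𝒢, #S = K.orderEmbOfFin hK (Fin.castLE hm i) := by
    simpa only [K, mem_image] using K.orderEmbOfFin_mem hK (Fin.castLE hm i)
  choose f hf𝒢 hfcard using hmem
  refine ⟨f, fun i j hij => ?_, hf𝒢⟩
  have hlt : #(f i) < #(f j) := by simpa [hfcard] using hij
  rcases h𝒢.total (hf𝒢 i) (hf𝒢 j) with h | h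
  · exact h.ssubset_of_ne (by rintro heq; simp [heq] at hlt)
  · exact absurd (card_le_card h) hlt.not_ge

def ButterflyFree {α : Type*} [DecidableEq α] (F : Finset (Finset α)) : Prop :=
  ∀ A ∈ F, ∀ B ∈ F, ∀ C ∈ F, ∀ D ∈ F,
    A ≠ B → A ≠ C → A ≠ D → B ≠ C → B ≠ D → C ≠ D → ¬ (A ∪ B ⊆ C ∩ D)

namespace ButterflyFree

variable {α : Type*} [DecidableEq α] {F : Finset (Finset α)} {A B C D : Finset α}

lemma eq_or_eq_of_ssubset (hF : ButterflyFree F) (hA : A ∈ F) (hB : B ∈ F) (hC : C ∈ F)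
    (hD : D ∈ F) (hAC : A ⊂ C) (hAD : A ⊂ D) (hBC : B ⊂ C) (hBD : B ⊂ D) : A = B ∨ C = D := by
  by_contra! h
  exact hF A hA B hB C hC D hD h.1 hAC.ne hAD.ne hBC.ne hBD.ne h.2 <|
    union_subset (subset_inter hAC.subset hAD.subset) (subset_inter hBC.subset hBD.subset)

lemma not_ssubset_chain (hF : ButterflyFree F) (hA : A ∈ F) (hB : B ∈ F) (hC : C ∈ F)
    (hD : D ∈ F) (hAB : A ⊂ B) (hBC : B ⊂ C) (hCD : C ⊂ D) : False := by
  rcases hF.eq_or_eq_of_ssubset hA hB hC hD (hAB.trans hBC) (hAB.trans (hBC.trans hCD)) hBC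
    (hBC.trans hCD) with rfl | rfl
  · exact hAB.ne rfl
  · exact hCD.ne rfl

lemma eq_of_ssubset_of_ssubset (hF : ButterflyFree F) (hA : A ∈ F) (hB : B ∈ F) (hC : C ∈ F)
    (hD : D ∈ F) (hAC : A ⊂ C) (hBC : B ⊂ C) (hCD : C ⊂ D) : A = B :=
  (hF.eq_or_eq_of_ssubset hA hB hC hD hAC (hAC.trans hCD) hBC (hBC.trans hCD)).resolve_right
    hCD.ne

lemma eq_of_ssupset_of_ssupset (hF : ButterflyFree F) (hA : A ∈ F) (hB : B ∈ F) (hC : C ∈ F)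
    (hD : D ∈ F) (hAB : A ⊂ B) (hBC : B ⊂ C) (hBD : B ⊂ D) : C = D :=
  (hF.eq_or_eq_of_ssubset hA hB hC hD (hAB.trans hBC) (hAB.trans hBD) hBC hBD).resolve_left
    hAB.ne

end ButterflyFree

variable {n : ℕ}

/-- The `k`-th set `{σ 0, …, σ (k - 1)}` of the maximal chain of `σ`. -/
def initSeg (σ : Perm (Fin n)) (k : ℕ) : Finset (Fin n) := {i | (σ⁻¹ i : ℕ) < k}

def IsInitSeg (σ : Perm (Fin n)) (S : Finset (Fin n)) : Prop := initSeg σ #S = S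

instance (σ : Perm (Fin n)) : DecidablePred (IsInitSeg σ) :=
  fun S => inferInstanceAs (Decidable (initSeg σ #S = S))

lemma card_initSeg (σ : Perm (Fin n)) {k : ℕ} (hk : k ≤ n) : #(initSeg σ k) = k := by
  rw [initSeg, card_equiv σ⁻¹ (t := {j : Fin n | (j : ℕ) < k}) (by simp), Fin.card_filter_val_lt,
    min_eq_right hk]

lemma initSeg_mono (σ : Perm (Fin n)) {k l : ℕ} (h : k ≤ l) : initSeg σ k ⊆ initSeg σ l :=
  fun _ hi => by simp only [initSeg, mem_filter, mem_univ, true_and] at hi ⊢; omega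

lemma initSeg_mul (π σ : Perm (Fin n)) (k : ℕ) : initSeg (π * σ) k = π • initSeg σ k := by
  ext i
  rw [← inv_smul_mem_iff]
  simp [initSeg, Perm.smul_def]

namespace IsInitSeg

variable {σ : Perm (Fin n)} {S T : Finset (Fin n)}

lemma subset_of_card_le (hS : IsInitSeg σ S) (hT : IsInitSeg σ T) (h : #S ≤ #T) : S ⊆ T := by
  rw [← hS, ← hT]
  exact initSeg_mono σ h

lemma eq_of_card_eq (hS : IsInitSeg σ S) (hT : IsInitSeg σ T) (h : #S = #T) : S = T :=
  (hS.subset_of_card_le hT h.le).antisymm (hT.subset_of_card_le hS h.ge)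

lemma ssubset_of_card_lt (hS : IsInitSeg σ S) (hT : IsInitSeg σ T) (h : #S < #T) : S ⊂ T :=
  (hS.subset_of_card_le hT h.le).ssubset_of_ne (by rintro rfl; exact h.false)

end IsInitSeg

lemma isInitSeg_mul_smul_iff {π σ : Perm (Fin n)} {S : Finset (Fin n)} :
    IsInitSeg (π * σ) (π • S) ↔ IsInitSeg σ S := by
  rw [IsInitSeg, IsInitSeg, card_smul_finset, initSeg_mul, smul_left_cancel_iff]

lemma card_filter_isInitSeg_smul (π : Perm (Fin n)) (S T : Finset (Fin n)) :
    #{σ | IsInitSeg σ (π • S) ∧ IsInitSeg σ (π • T)} = #{σ | IsInitSeg σ S ∧ IsInitSeg σ T} :=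
  (card_equiv (Equiv.mulLeft π) fun σ => by simp [isInitSeg_mul_smul_iff]).symm

lemma card_filter_isInitSeg_mul_choose (S : Finset (Fin n)) :
    #{σ | IsInitSeg σ S} * n.choose #S = n.factorial := by
  have hS : #S ≤ n := by simpa using card_le_univ S
  have hfib := card_eq_sum_card_fiberwise (s := (univ : Finset (Perm (Fin n))))
    (t := powersetCard #S (univ : Finset (Fin n))) (f := fun σ => initSeg σ #S)
    fun σ _ => by simp [card_initSeg σ hS]
  have hconst : ∀ T ∈ powersetCard #S (univ : Finset (Fin n)),
      #{σ | initSeg σ #S = T} = #{σ | IsInitSeg σ S} := by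
    intro T hT
    obtain ⟨π, rfl⟩ := exists_perm_smul_eq (mem_powersetCard.mp hT).2.symm
    calc #{σ | initSeg σ #S = π • S} = #{σ | IsInitSeg σ (π • S)} := by
          simp [IsInitSeg, card_smul_finset]
      _ = #{σ | IsInitSeg σ S} :=
          (card_equiv (Equiv.mulLeft π) fun σ => by simp [isInitSeg_mul_smul_iff]).symm
  simp only [sum_congr rfl hconst, sum_const, card_powersetCard, card_univ, Fintype.card_fin,
    Fintype.card_perm, smul_eq_mul] at hfib
  rw [hfib, mul_comm]

lemma two_mul_card_filter_isInitSeg_and_le {π : Perm (Fin n)} {U V : Finset (Fin n)}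
    (hU : π • U = U) (hV : π • V ≠ V) :
    2 * #{σ | IsInitSeg σ U ∧ IsInitSeg σ V} ≤ #{σ | IsInitSeg σ U} := by
  set X : Finset (Perm (Fin n)) := {σ | IsInitSeg σ U ∧ IsInitSeg σ V}
  set X' : Finset (Perm (Fin n)) := {σ | IsInitSeg σ U ∧ IsInitSeg σ (π • V)}
  have hdisj : Disjoint X X' :=
    disjoint_filter.mpr fun σ _ h h' => hV (h'.2.eq_of_card_eq h.2 (card_smul_finset π V))
  calc 2 * #X = #(X ∪ X') := by
        rw [card_union_of_disjoint hdisj, ← card_filter_isInitSeg_smul π U V, hU]; ring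
    _ ≤ #{σ | IsInitSeg σ U} := card_le_card <| union_subset
        (monotone_filter_right _ fun _ _ => And.left) (monotone_filter_right _ fun _ _ => And.left)

lemma two_mul_card_filter_isInitSeg_of_ssubset {A B : Finset (Fin n)} (hA : A.Nonempty)
    (hAB : A ⊂ B) : 2 * #{σ | IsInitSeg σ B ∧ IsInitSeg σ A} ≤ #{σ | IsInitSeg σ B} := by
  obtain ⟨x, hx⟩ := hA
  obtain ⟨y, hyB, hyA⟩ := exists_of_ssubset hAB
  exact two_mul_card_filter_isInitSeg_and_le
    (swap_smul_finset_eq_self (iff_of_true (hAB.subset hx) hyB)) (swap_smul_finset_ne hx hyA)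

lemma two_mul_card_filter_isInitSeg_of_ssupset {B C : Finset (Fin n)} (hBC : B ⊂ C)
    (hC : C ≠ univ) : 2 * #{σ | IsInitSeg σ B ∧ IsInitSeg σ C} ≤ #{σ | IsInitSeg σ B} := by
  obtain ⟨x, hxC, hxB⟩ := exists_of_ssubset hBC
  obtain ⟨y, hyC⟩ : ∃ y, y ∉ C := by simpa [eq_univ_iff_forall] using hC
  exact two_mul_card_filter_isInitSeg_and_le
    (swap_smul_finset_eq_self (iff_of_false hxB fun hyB => hyC (hBC.subset hyB)))
    (swap_smul_finset_ne hxC hyC)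

def trace (F : Finset (Finset (Fin n))) (σ : Perm (Fin n)) : Finset (Finset (Fin n)) :=
  {S ∈ F | IsInitSeg σ S}

variable {F : Finset (Finset (Fin n))}

lemma isChain_trace (σ : Perm (Fin n)) : IsChain (· ⊆ ·) (trace F σ : Set (Finset (Fin n))) := by
  intro S hS T hT _
  simp only [trace, mem_coe, mem_filter] at hS hT
  rcases le_total #S #T with h | h
  · exact .inl (hS.2.subset_of_card_le hT.2 h)
  · exact .inr (hT.2.subset_of_card_le hS.2 h)

variable (F) in
lemma sum_inv_choose_eq :
    ∑ S ∈ F, (1 : ℚ) / n.choose #S = (∑ σ, #(trace F σ) : ℕ) / n.factorial := by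
  have hdouble : ∑ σ, #(trace F σ) = ∑ S ∈ F, #{σ | IsInitSeg σ S} := by
    simp only [trace, card_filter]
    exact sum_comm
  rw [hdouble, Nat.cast_sum, sum_div]
  refine sum_congr rfl fun S _ => ?_
  have hpos : 0 < n.choose #S := Nat.choose_pos (by simpa using card_le_univ S)
  rw [div_eq_div_iff (by positivity) (by positivity), one_mul]
  exact_mod_cast (card_filter_isInitSeg_mul_choose S).symm

namespace ButterflyFree

variable (hF : ButterflyFree F)
include hF

lemma card_trace_le_three (σ : Perm (Fin n)) : #(trace F σ) ≤ 3 := by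
  by_contra! h
  obtain ⟨f, hf, hfF⟩ := exists_strictMono_of_isChain (isChain_trace σ) h
  have hmem (i) : f i ∈ F := (mem_filter.mp (hfF i)).1
  exact hF.not_ssubset_chain (hmem 0) (hmem 1) (hmem 2) (hmem 3) (hf (by decide))
    (hf (by decide)) (hf (by decide))

variable {A B C : Finset (Fin n)} (hA : A ∈ F) (hB : B ∈ F) (hC : C ∈ F) (hAB : A ⊂ B)
  (hBC : B ⊂ C)
include hA hB hC hAB hBC

section

variable {σ : Perm (Fin n)} (hσ : IsInitSeg σ B)
include hσ

lemma trace_subset : trace F σ ⊆ {A, B, C} := by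
  intro S hS
  obtain ⟨hSF, hSσ⟩ := mem_filter.mp hS
  simp only [mem_insert, mem_singleton]
  rcases lt_trichotomy #S #B with h | h | h
  · exact .inl (hF.eq_of_ssubset_of_ssubset hSF hA hB hC (hSσ.ssubset_of_card_lt hσ h) hAB hBC)
  · exact .inr (.inl (hSσ.eq_of_card_eq hσ h))
  · exact .inr (.inr (hF.eq_of_ssupset_of_ssupset hA hB hSF hC hAB
      (hσ.ssubset_of_card_lt hSσ h) hBC))

lemma isInitSeg_of_card_trace_eq_three (h3 : #(trace F σ) = 3) :
    IsInitSeg σ A ∧ IsInitSeg σ C := by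
  have htr : trace F σ = {A, B, C} :=
    eq_of_subset_of_card_le (hF.trace_subset hA hB hC hAB hBC hσ) (h3 ▸ card_le_three)
  have hmem (S) (hS : S ∈ ({A, B, C} : Finset _)) : IsInitSeg σ S := (mem_filter.mp (htr ▸ hS)).2
  exact ⟨hmem A (by simp), hmem C (by simp)⟩

lemma trace_eq_singleton (hσA : ¬IsInitSeg σ A) (hσC : ¬IsInitSeg σ C) : trace F σ = {B} := by
  refine eq_singleton_iff_unique_mem.mpr ⟨mem_filter.mpr ⟨hB, hσ⟩, fun S hS => ?_⟩
  have hSσ := (mem_filter.mp hS).2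
  have := hF.trace_subset hA hB hC hAB hBC hσ hS
  simp only [mem_insert, mem_singleton] at this
  rcases this with rfl | rfl | rfl
  exacts [absurd hSσ hσA, rfl, absurd hSσ hσC]

end

lemma card_filter_card_trace_eq_three_le_of_ssubset (hA₀ : A.Nonempty) (hCn : C ≠ univ) :
    #{σ | IsInitSeg σ B ∧ #(trace F σ) = 3} ≤ #{σ | IsInitSeg σ B ∧ #(trace F σ) = 1} := by
  set T : Finset (Perm (Fin n)) := {σ | IsInitSeg σ B}
  set X : Finset (Perm (Fin n)) := {σ | IsInitSeg σ B ∧ IsInitSeg σ A}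
  set Y : Finset (Perm (Fin n)) := {σ | IsInitSeg σ B ∧ IsInitSeg σ C}
  have hbad : ({σ | IsInitSeg σ B ∧ #(trace F σ) = 3} : Finset (Perm (Fin n))) ⊆ X ∩ Y := by
    intro σ hσ
    obtain ⟨hσB, h3⟩ := (mem_filter.mp hσ).2
    have := hF.isInitSeg_of_card_trace_eq_three hA hB hC hAB hBC hσB h3
    simp [X, Y, hσB, this]
  have hgood :
      T \ (X ∪ Y) ⊆ ({σ | IsInitSeg σ B ∧ #(trace F σ) = 1} : Finset (Perm (Fin n))) := by
    intro σ hσ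
    simp only [T, X, Y, mem_sdiff, mem_union, mem_filter, mem_univ, true_and, not_or,
      not_and] at hσ
    obtain ⟨hσB, hσA, hσC⟩ := hσ
    simp [hσB, hF.trace_eq_singleton hA hB hC hAB hBC hσB (hσA hσB) (hσC hσB)]
  calc _ ≤ #(X ∩ Y) := card_le_card hbad
    _ ≤ #(T \ (X ∪ Y)) := card_inter_le_card_sdiff_union
        (monotone_filter_right _ fun _ _ => And.left) (monotone_filter_right _ fun _ _ => And.left)
        (two_mul_card_filter_isInitSeg_of_ssubset hA₀ hAB)
        (two_mul_card_filter_isInitSeg_of_ssupset hBC hCn)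
    _ ≤ _ := card_le_card hgood

end ButterflyFree

lemma ButterflyFree.card_filter_card_trace_eq_three_le (hF : ButterflyFree F) (hempty : ∅ ∉ F)
    (hfull : univ ∉ F) : #{σ | #(trace F σ) = 3} ≤ #{σ | #(trace F σ) = 1} := by
  set Mid : Finset (Finset (Fin n)) := {B ∈ F | ∃ A ∈ F, ∃ C ∈ F, A ⊂ B ∧ B ⊂ C}
  set bad : Finset (Fin n) → Finset (Perm (Fin n)) :=
    fun B => {σ | IsInitSeg σ B ∧ #(trace F σ) = 3}
  set good : Finset (Fin n) → Finset (Perm (Fin n)) :=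
    fun B => {σ | IsInitSeg σ B ∧ #(trace F σ) = 1}
  have hcover : ({σ | #(trace F σ) = 3} : Finset (Perm (Fin n))) ⊆ Mid.biUnion bad := by
    intro σ hσ
    have h3 := (mem_filter.mp hσ).2
    obtain ⟨f, hf, hfF⟩ := exists_strictMono_of_isChain (isChain_trace σ) h3.ge
    have hmem (i) := mem_filter.mp (hfF i)
    exact mem_biUnion.mpr ⟨f 1, mem_filter.mpr ⟨(hmem 1).1, f 0, (hmem 0).1, f 2, (hmem 2).1,
      hf (by decide), hf (by decide)⟩, mem_filter.mpr ⟨mem_univ _, (hmem 1).2, h3⟩⟩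
  have hdisj : (Mid : Set (Finset (Fin n))).PairwiseDisjoint good := by
    intro B hB B' hB' hne
    refine disjoint_filter.mpr fun σ _ h h' => hne ?_
    exact card_le_one.mp h.2.le _ (mem_filter.mpr ⟨(mem_filter.mp hB).1, h.1⟩) _
      (mem_filter.mpr ⟨(mem_filter.mp hB').1, h'.1⟩)
  calc #{σ | #(trace F σ) = 3} ≤ #(Mid.biUnion bad) := card_le_card hcover
    _ ≤ ∑ B ∈ Mid, #(bad B) := card_biUnion_le
    _ ≤ ∑ B ∈ Mid, #(good B) := sum_le_sum fun B hB => by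
        obtain ⟨hB, A, hA, C, hC, hAB, hBC⟩ := mem_filter.mp hB
        exact hF.card_filter_card_trace_eq_three_le_of_ssubset hA hB hC hAB hBC
          (nonempty_iff_ne_empty.mpr (ne_of_mem_of_not_mem hA hempty))
          (ne_of_mem_of_not_mem hC hfull)
    _ = #(Mid.biUnion good) := (card_biUnion hdisj).symm
    _ ≤ #{σ | #(trace F σ) = 1} :=
        card_le_card (biUnion_subset.mpr fun _ _ => monotone_filter_right _ fun _ _ => And.right)

end ButterflyLubell

theorem stmt_1_general (n : ℕ) (F : Finset (Finset (Fin n)))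
    (hempty : ∅ ∉ F) (hfull : (Finset.univ : Finset (Fin n)) ∉ F)
    (hstar : ∀ A ∈ F, ∀ B ∈ F, ∀ C ∈ F, ∀ D ∈ F,
      A ≠ B → A ≠ C → A ≠ D → B ≠ C → B ≠ D → C ≠ D → ¬ (A ∪ B ⊆ C ∩ D)) :
    ∑ S ∈ F, (1 : ℚ) / (n.choose S.card) ≤ 2 := by
  have hF : ButterflyLubell.ButterflyFree F := hstar
  have hsum := ButterflyLubell.sum_le_two_mul_card (fun σ _ => hF.card_trace_le_three σ)
    (by simpa using hF.card_filter_card_trace_eq_three_le hempty hfull)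
  rw [card_univ, Fintype.card_perm, Fintype.card_fin] at hsum
  rw [ButterflyLubell.sum_inv_choose_eq, div_le_iff₀ (by positivity)]
  exact_mod_cast hsum

theorem stmt_1 (n : ℕ) (hn : 3 ≤ n) (F : Finset (Finset (Fin n)))
    (hempty : ∅ ∉ F) (hfull : (Finset.univ : Finset (Fin n)) ∉ F)
    (hstar : ∀ A ∈ F, ∀ B ∈ F, ∀ C ∈ F, ∀ D ∈ F,
      A ≠ B → A ≠ C → A ≠ D → B ≠ C → B ≠ D → C ≠ D → ¬ (A ∪ B ⊆ C ∩ D)) :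
    ∑ S ∈ F, (1 : ℚ) / (n.choose S.card) ≤ 2 :=
  stmt_1_general n F hempty hfull hstar
end

section
/- Fix n ≥ 3 and consider subsets of Z/nZ. An interval is a set of the form {k, k+1, ..., l} of consecutive residues mod n. Let Ĥ be a family of intervals, not containing ∅ or the whole set, such that every member of Ĥ is contained in at most one other member of Ĥ. If m is the number of maximal members of Ĥ and a is the number of non-maximal members, then m + a/2 ≤ n. -/
set_option linter.unusedSectionVars false

/-- `S` is an interval of consecutive residues modulo `n`. -/
def IsCyclicInterval (n : ℕ) (S : Finset (ZMod n)) : Prop :=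
  ∃ k : ZMod n, ∃ m : ℕ, S = (Finset.range m).image (fun i : ℕ => k + (i : ZMod n))

namespace Stmt2Aux

variable {n : ℕ} [NeZero n]

def Iv (n : ℕ) (k : ZMod n) (p : ℕ) : Finset (ZMod n) :=
  (Finset.range p).image (fun i : ℕ => k + (i : ZMod n))

lemma mem_Iv {k x : ZMod n} {p : ℕ} : x ∈ Iv n k p ↔ ∃ i < p, x = k + (i : ZMod n) := by
  simp [Iv, eq_comm]

lemma cast_inj_of_lt {i j : ℕ} (hi : i < n) (hj : j < n) (h : (i : ZMod n) = j) : i = j := by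
  have := congrArg ZMod.val h
  rwa [ZMod.val_cast_of_lt hi, ZMod.val_cast_of_lt hj] at this

lemma canonical {S : Finset (ZMod n)} (h : IsCyclicInterval n S)
    (hne : S ≠ ∅) (hproper : S ≠ Finset.univ) :
    ∃ k p, 0 < p ∧ p < n ∧ S = Iv n k p := by
  obtain ⟨k, m, rfl⟩ := h
  refine ⟨k, m, ?_, ?_, rfl⟩
  · rcases Nat.eq_zero_or_pos m with h0 | h0
    · subst h0; simp at hne
    · exact h0
  · by_contra hmn
    push_neg at hmn
    apply hproper
    apply Finset.eq_univ_of_forall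
    intro x
    refine Finset.mem_image.2 ⟨(x - k).val, Finset.mem_range.2 (lt_of_lt_of_le (ZMod.val_lt _) hmn), ?_⟩
    rw [ZMod.natCast_rightInverse (x - k)]
    ring

lemma left_spec {k : ZMod n} {p : ℕ} (hp : 0 < p) (hpn : p < n) {x : ZMod n} :
    (x ∈ Iv n k p ∧ x - 1 ∉ Iv n k p) ↔ x = k := by
  constructor
  · rintro ⟨hx, hx'⟩
    obtain ⟨i, hi, rfl⟩ := mem_Iv.1 hx
    rcases Nat.eq_zero_or_pos i with h0 | h0
    · subst h0; simp
    · exfalso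
      apply hx'
      refine mem_Iv.2 ⟨i - 1, by omega, ?_⟩
      have : ((i - 1 : ℕ) : ZMod n) = (i : ZMod n) - 1 := by
        push_cast [Nat.cast_sub h0]; ring
      rw [this]; ring
  · rintro rfl
    refine ⟨mem_Iv.2 ⟨0, hp, by simp⟩, ?_⟩
    rintro hmem
    obtain ⟨i, hi, hk⟩ := mem_Iv.1 hmem
    have hcast : (i : ZMod n) = ((n - 1 : ℕ) : ZMod n) := by
      have h1 : ((n - 1 : ℕ) : ZMod n) = (n : ℕ) - 1 := by
        push_cast [Nat.cast_sub (by omega : 1 ≤ n)]; ring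
      have h2 : ((n : ℕ) : ZMod n) = 0 := ZMod.natCast_self n
      linear_combination -hk - h1 - h2
    have := cast_inj_of_lt (lt_trans hi hpn) (by omega) hcast
    omega

lemma right_spec {k : ZMod n} {p : ℕ} (hp : 0 < p) (hpn : p < n) {x : ZMod n} :
    (x ∈ Iv n k p ∧ x + 1 ∉ Iv n k p) ↔ x = k + ((p - 1 : ℕ) : ZMod n) := by
  constructor
  · rintro ⟨hx, hx'⟩
    obtain ⟨i, hi, rfl⟩ := mem_Iv.1 hx
    by_cases hip : i + 1 < p
    · exfalso
      apply hx'
      refine mem_Iv.2 ⟨i + 1, hip, ?_⟩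
      push_cast
      ring
    · have : i = p - 1 := by omega
      rw [this]
  · rintro rfl
    refine ⟨mem_Iv.2 ⟨p - 1, by omega, rfl⟩, ?_⟩
    rintro hmem
    obtain ⟨i, hi, hk⟩ := mem_Iv.1 hmem
    have hcast : ((p : ℕ) : ZMod n) = (i : ZMod n) := by
      have h1 : ((p - 1 : ℕ) : ZMod n) + 1 = ((p : ℕ) : ZMod n) := by
        push_cast [Nat.cast_sub (by omega : 1 ≤ p)]; ring
      linear_combination hk - h1
    have := cast_inj_of_lt hpn (lt_trans hi hpn) hcast
    omega

noncomputable def leftEnd (S : Finset (ZMod n)) : ZMod n :=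
  if h : ∃ x, x ∈ S ∧ x - 1 ∉ S then h.choose else 0

noncomputable def rightEnd (S : Finset (ZMod n)) : ZMod n :=
  if h : ∃ x, x ∈ S ∧ x + 1 ∉ S then h.choose else 0

lemma leftEnd_Iv {k : ZMod n} {p : ℕ} (hp : 0 < p) (hpn : p < n) : leftEnd (Iv n k p) = k := by
  have hex : ∃ x, x ∈ Iv n k p ∧ x - 1 ∉ Iv n k p := ⟨k, (left_spec hp hpn).mpr rfl⟩
  rw [leftEnd, dif_pos hex]
  exact (left_spec hp hpn).mp hex.choose_spec

lemma rightEnd_Iv {k : ZMod n} {p : ℕ} (hp : 0 < p) (hpn : p < n) :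
    rightEnd (Iv n k p) = k + ((p - 1 : ℕ) : ZMod n) := by
  have hex : ∃ x, x ∈ Iv n k p ∧ x + 1 ∉ Iv n k p :=
    ⟨k + ((p - 1 : ℕ) : ZMod n), (right_spec hp hpn).mpr rfl⟩
  rw [rightEnd, dif_pos hex]
  exact (right_spec hp hpn).mp hex.choose_spec

lemma Iv_subset_left {k : ZMod n} {p q : ℕ} (h : p ≤ q) : Iv n k p ⊆ Iv n k q :=
  Finset.image_subset_image (Finset.range_subset_range.2 h)

lemma Iv_subset_right {k l : ZMod n} {p q : ℕ} (hp : 0 < p) (hq : 0 < q) (h : p ≤ q)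
    (hend : k + ((p - 1 : ℕ) : ZMod n) = l + ((q - 1 : ℕ) : ZMod n)) :
    Iv n k p ⊆ Iv n l q := by
  intro x hx
  obtain ⟨i, hi, rfl⟩ := mem_Iv.1 hx
  refine mem_Iv.2 ⟨q - p + i, by omega, ?_⟩
  have hj : ((q - p + i : ℕ) : ZMod n)
      = ((q - 1 : ℕ) : ZMod n) - ((p - 1 : ℕ) : ZMod n) + (i : ZMod n) := by
    push_cast [Nat.cast_sub (by omega : p ≤ q), Nat.cast_sub (by omega : 1 ≤ p),
      Nat.cast_sub (by omega : 1 ≤ q)]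
    ring
  rw [hj]
  linear_combination hend

lemma p_eq_of_ends {p q : ℕ} (hp : 0 < p) (hpn : p < n) (hq : 0 < q) (hqn : q < n)
    (h : ((p - 1 : ℕ) : ZMod n) = ((q - 1 : ℕ) : ZMod n)) : p = q := by
  have := cast_inj_of_lt (by omega : p - 1 < n) (by omega : q - 1 < n) h
  omega

/-- The slot function: maximal members use both slots, others one slot. -/
noncomputable def phi (n : ℕ) [NeZero n] (Max : Finset (Finset (ZMod n)))
    (x : Finset (ZMod n) × Bool) : ZMod n × Bool :=
  if x.1 ∈ Max then (cond x.2 (leftEnd x.1, true) (rightEnd x.1, false))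
  else if leftEnd x.1 ∈ Max.image leftEnd then (rightEnd x.1, false)
  else (leftEnd x.1, true)

end Stmt2Aux

open Stmt2Aux
theorem stmt_2 (n : ℕ) [NeZero n] (hn : 3 ≤ n) (H : Finset (Finset (ZMod n)))
    (hint : ∀ S ∈ H, IsCyclicInterval n S)
    (hempty : ∅ ∉ H) (hfull : (Finset.univ : Finset (ZMod n)) ∉ H)
    (hone : ∀ S ∈ H, (H.filter (fun T => S ⊂ T)).card ≤ 1) :
    ((H.filter (fun S => ∀ T ∈ H, ¬ S ⊂ T)).card : ℚ)
      + ((H.filter (fun S => ∃ T ∈ H, S ⊂ T)).card : ℚ) / 2 ≤ n := by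
  have rep : ∀ S ∈ H, ∃ k p, 0 < p ∧ p < n ∧ S = Iv n k p := by
    intro S hS
    exact canonical (hint S hS) (fun h => hempty (h ▸ hS)) (fun h => hfull (h ▸ hS))
  -- nestedness from shared endpoints
  have lnest : ∀ S ∈ H, ∀ T ∈ H, leftEnd S = leftEnd T → S ⊆ T ∨ T ⊆ S := by
    intro S hS T hT hL
    obtain ⟨k, p, hp, hpn, rfl⟩ := rep S hS
    obtain ⟨l, q, hq, hqn, rfl⟩ := rep T hT
    rw [leftEnd_Iv hp hpn, leftEnd_Iv hq hqn] at hL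
    subst hL
    rcases le_total p q with h | h
    · exact Or.inl (Iv_subset_left h)
    · exact Or.inr (Iv_subset_left h)
  have rnest : ∀ S ∈ H, ∀ T ∈ H, rightEnd S = rightEnd T → S ⊆ T ∨ T ⊆ S := by
    intro S hS T hT hR
    obtain ⟨k, p, hp, hpn, rfl⟩ := rep S hS
    obtain ⟨l, q, hq, hqn, rfl⟩ := rep T hT
    rw [rightEnd_Iv hp hpn, rightEnd_Iv hq hqn] at hR
    rcases le_total p q with h | h
    · exact Or.inl (Iv_subset_right hp hq h hR)
    · exact Or.inr (Iv_subset_right hq hp h hR.symm)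
  have endeq : ∀ S ∈ H, ∀ T ∈ H, leftEnd S = leftEnd T → rightEnd S = rightEnd T → S = T := by
    intro S hS T hT hL hR
    obtain ⟨k, p, hp, hpn, rfl⟩ := rep S hS
    obtain ⟨l, q, hq, hqn, rfl⟩ := rep T hT
    rw [leftEnd_Iv hp hpn, leftEnd_Iv hq hqn] at hL
    rw [rightEnd_Iv hp hpn, rightEnd_Iv hq hqn] at hR
    subst hL
    have hpq : p = q := p_eq_of_ends hp hpn hq hqn (by linear_combination hR)
    rw [hpq]
  have two_parents : ∀ S ∈ H, ∀ T ∈ H, ∀ U ∈ H, T ≠ U → S ⊂ T → S ⊂ U → False := by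
    intro S hS T hT U hU hTU h1 h2
    have hsub : ({T, U} : Finset (Finset (ZMod n))) ⊆ H.filter (fun T => S ⊂ T) := by
      intro X hX
      rcases Finset.mem_insert.1 hX with rfl | hX
      · exact Finset.mem_filter.2 ⟨hT, h1⟩
      · rw [Finset.mem_singleton] at hX
        subst hX
        exact Finset.mem_filter.2 ⟨hU, h2⟩
    have hc := Finset.card_le_card hsub
    rw [Finset.card_pair hTU] at hc
    have := hone S hS
    omega
  classical
  set Max := H.filter (fun S => ∀ T ∈ H, ¬ S ⊂ T) with hMaxdef
  set A := H.filter (fun S => ∃ T ∈ H, S ⊂ T) with hAdef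
  have hMaxmem : ∀ {S}, S ∈ Max ↔ S ∈ H ∧ ∀ T ∈ H, ¬ S ⊂ T := by
    intro S; rw [hMaxdef, Finset.mem_filter]
  have hAmem : ∀ {S}, S ∈ A ↔ S ∈ H ∧ ∃ T ∈ H, S ⊂ T := by
    intro S; rw [hAdef, Finset.mem_filter]
  have hdisjMA : Disjoint Max A := by
    rw [Finset.disjoint_left]
    intro S hSM hSA
    obtain ⟨hSH, hmax⟩ := hMaxmem.1 hSM
    obtain ⟨-, T, hTH, hST⟩ := hAmem.1 hSA
    exact hmax T hTH hST
  -- every member of H is in Max or A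
  have hMA : ∀ S ∈ H, S ∉ Max → S ∈ A := by
    intro S hS hSM
    rw [hAmem]
    refine ⟨hS, ?_⟩
    by_contra hc
    push_neg at hc
    exact hSM (hMaxmem.2 ⟨hS, fun T hT => hc T hT⟩)
  -- helper: comparable maximal members are equal
  have max_eq : ∀ S ∈ Max, ∀ T ∈ Max, (S ⊆ T ∨ T ⊆ S) → S = T := by
    intro S hSM T hTM hc
    by_contra hne
    obtain ⟨hSH, hSmax⟩ := hMaxmem.1 hSM
    obtain ⟨hTH, hTmax⟩ := hMaxmem.1 hTM
    rcases hc with h | h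
    · exact hSmax T hTH (h.ssubset_of_ne hne)
    · exact hTmax S hSH (h.ssubset_of_ne (Ne.symm hne))
  -- helper: comparable non-maximal members are equal
  have nonmax_eq : ∀ S ∈ A, ∀ T ∈ A, (S ⊆ T ∨ T ⊆ S) → S = T := by
    intro S hSA T hTA hc
    by_contra hne
    obtain ⟨hSH, W, hWH, hSW⟩ := hAmem.1 hSA
    obtain ⟨hTH, V, hVH, hTV⟩ := hAmem.1 hTA
    rcases hc with h | h
    · exact two_parents S hSH T hTH V hVH (ne_of_ssubset hTV) (h.ssubset_of_ne hne)
        ((h.ssubset_of_ne hne).trans hTV)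
    · exact two_parents T hTH S hSH W hWH (ne_of_ssubset hSW) (h.ssubset_of_ne (Ne.symm hne))
        ((h.ssubset_of_ne (Ne.symm hne)).trans hSW)
  -- helper: a member comparable to a maximal member is inside it
  have lt_of_max : ∀ U ∈ Max, ∀ T ∈ H, T ≠ U → (T ⊆ U ∨ U ⊆ T) → T ⊂ U := by
    intro U hUM T hTH hne hc
    obtain ⟨hUH, hUmax⟩ := hMaxmem.1 hUM
    rcases hc with h | h
    · exact h.ssubset_of_ne hne
    · exact absurd (h.ssubset_of_ne (Ne.symm hne)) (hUmax T hTH)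
  -- the domain of the injection
  set D : Finset (Finset (ZMod n) × Bool) := Max ×ˢ Finset.univ ∪ A ×ˢ {true} with hDdef
  have hDcard : D.card = Max.card * 2 + A.card := by
    have hdisj2 : Disjoint (Max ×ˢ (Finset.univ : Finset Bool)) (A ×ˢ ({true} : Finset Bool)) := by
      rw [Finset.disjoint_left]
      rintro ⟨S, b⟩ h1 h2
      rw [Finset.mem_product] at h1 h2
      exact (Finset.disjoint_left.1 hdisjMA) h1.1 h2.1
    rw [hDdef, Finset.card_union_of_disjoint hdisj2, Finset.card_product, Finset.card_product]
    simp
  -- key asymmetric case: a maximal and a non-maximal member never collide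
  have asym : ∀ S ∈ Max, ∀ (b : Bool), ∀ T, T ∈ H → T ∉ Max → ∀ (c : Bool),
      phi n Max (S, b) = phi n Max (T, c) → False := by
    intro S hSM b T hTH hTM c hxy
    obtain ⟨hSH, hSmax⟩ := hMaxmem.1 hSM
    have hST : T ≠ S := fun h => hTM (h ▸ hSM)
    rw [phi, phi] at hxy
    simp only [if_pos hSM, if_neg hTM] at hxy
    by_cases hTL : leftEnd T ∈ Max.image leftEnd
    · rw [if_pos hTL] at hxy
      cases b with
      | true => simp at hxy
      | false =>
        simp only [cond] at hxy
        have hR : rightEnd S = rightEnd T := (Prod.mk.injEq _ _ _ _ ▸ hxy).1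
        obtain ⟨U, hUM, hUL⟩ := Finset.mem_image.1 hTL
        have hUH : U ∈ H := (hMaxmem.1 hUM).1
        have hTU : T ≠ U := fun h => hTM (h ▸ hUM)
        have hTsubU : T ⊂ U := lt_of_max U hUM T hTH hTU
          ((lnest T hTH U hUH hUL.symm))
        have hTsubS : T ⊂ S := lt_of_max S hSM T hTH hST
          ((rnest T hTH S hSH hR.symm))
        have hSU : S ≠ U := by
          rintro rfl
          exact hST (endeq T hTH S hSH hUL.symm hR.symm)
        exact two_parents T hTH S hSH U hUH hSU hTsubS hTsubU
    · rw [if_neg hTL] at hxy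
      cases b with
      | false => simp at hxy
      | true =>
        simp only [cond] at hxy
        have hL : leftEnd S = leftEnd T := (Prod.mk.injEq _ _ _ _ ▸ hxy).1
        exact hTL (Finset.mem_image.2 ⟨S, hSM, hL⟩)
  -- the injection
  have hcard : D.card ≤ (Finset.univ : Finset (ZMod n × Bool)).card := by
    apply Finset.card_le_card_of_injOn (phi n Max) (fun a _ => Finset.mem_univ _)
    rintro ⟨S, b⟩ hx ⟨T, c⟩ hy hxy
    rw [Finset.mem_coe, hDdef] at hx hy
    have hxm : S ∈ Max ∨ (S ∈ A ∧ b = true) := by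
      rcases Finset.mem_union.1 hx with h | h
      · exact Or.inl (Finset.mem_product.1 h).1
      · have := Finset.mem_product.1 h
        exact Or.inr ⟨this.1, by simpa using this.2⟩
    have hym : T ∈ Max ∨ (T ∈ A ∧ c = true) := by
      rcases Finset.mem_union.1 hy with h | h
      · exact Or.inl (Finset.mem_product.1 h).1
      · have := Finset.mem_product.1 h
        exact Or.inr ⟨this.1, by simpa using this.2⟩
    by_cases hSM : S ∈ Max <;> by_cases hTM : T ∈ Max
    · -- both maximal
      obtain ⟨hSH, hSmax⟩ := hMaxmem.1 hSM
      obtain ⟨hTH, hTmax⟩ := hMaxmem.1 hTM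
      rw [phi, phi] at hxy
      simp only [if_pos hSM, if_pos hTM] at hxy
      cases b <;> cases c <;> simp only [cond] at hxy
      · have hR : rightEnd S = rightEnd T := (Prod.mk.injEq _ _ _ _ ▸ hxy).1
        have := max_eq S hSM T hTM (rnest S hSH T hTH hR)
        simp [this]
      · exact absurd (Prod.mk.injEq _ _ _ _ ▸ hxy).2 (by simp)
      · exact absurd (Prod.mk.injEq _ _ _ _ ▸ hxy).2 (by simp)
      · have hL : leftEnd S = leftEnd T := (Prod.mk.injEq _ _ _ _ ▸ hxy).1
        have := max_eq S hSM T hTM (lnest S hSH T hTH hL)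
        simp [this]
    · -- S maximal, T not
      rcases hym with h | ⟨hTA, rfl⟩
      · exact absurd h hTM
      exact absurd hxy (fun h => asym S hSM b T (hAmem.1 hTA).1 hTM true h)
    · -- T maximal, S not
      rcases hxm with h | ⟨hSA, rfl⟩
      · exact absurd h hSM
      exact absurd hxy.symm (fun h => asym T hTM c S (hAmem.1 hSA).1 hSM true h)
    · -- both non-maximal
      rcases hxm with h | ⟨hSA, rfl⟩
      · exact absurd h hSM
      rcases hym with h | ⟨hTA, rfl⟩
      · exact absurd h hTM
      have hSH := (hAmem.1 hSA).1
      have hTH := (hAmem.1 hTA).1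
      rw [phi, phi] at hxy
      simp only [if_neg hSM, if_neg hTM] at hxy
      by_cases hSL : leftEnd S ∈ Max.image leftEnd <;>
        by_cases hTL : leftEnd T ∈ Max.image leftEnd
      · rw [if_pos hSL, if_pos hTL] at hxy
        have hR : rightEnd S = rightEnd T := (Prod.mk.injEq _ _ _ _ ▸ hxy).1
        have := nonmax_eq S hSA T hTA (rnest S hSH T hTH hR)
        simp [this]
      · rw [if_pos hSL, if_neg hTL] at hxy
        exact absurd (Prod.mk.injEq _ _ _ _ ▸ hxy).2 (by simp)
      · rw [if_neg hSL, if_pos hTL] at hxy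
        exact absurd (Prod.mk.injEq _ _ _ _ ▸ hxy).2 (by simp)
      · rw [if_neg hSL, if_neg hTL] at hxy
        have hL : leftEnd S = leftEnd T := (Prod.mk.injEq _ _ _ _ ▸ hxy).1
        have := nonmax_eq S hSA T hTA (lnest S hSH T hTH hL)
        simp [this]
  have huniv : (Finset.univ : Finset (ZMod n × Bool)).card = n * 2 := by
    simp [Finset.card_univ, ZMod.card]
  rw [hDcard, huniv] at hcard
  have hq : (Max.card * 2 + A.card : ℚ) ≤ n * 2 := by exact_mod_cast hcard
  linarith
end

section
/- Fix n ≥ 3 and consider intervals modulo n (sets of consecutive residues in Z/nZ). If Ĥ is a family of such intervals not containing ∅ or the full set Z/nZ, and Ĥ contains no four distinct members A, B, C, D with A ∪ B ⊆ C ∩ D, then |Ĥ| ≤ 2n. -/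
open Finset

section Chain

variable {α : Type*} [PartialOrder α] {t : Finset α}

theorem Finset.exists_forall_le_of_isChain (ht : IsChain (· ≤ ·) (t : Set α))
    (hne : t.Nonempty) : ∃ c ∈ t, ∀ a ∈ t, a ≤ c := by
  obtain ⟨c, hc⟩ := t.exists_maximal hne
  refine ⟨c, hc.prop, fun a ha => ?_⟩
  rcases eq_or_ne a c with rfl | hac
  · exact le_rfl
  · exact (ht ha hc.prop hac).elim id (hc.2 ha)

theorem Finset.exists_lt_lt_of_isChain [DecidableEq α] (ht : IsChain (· ≤ ·) (t : Set α))
    (h3 : 3 ≤ #t) : ∃ a ∈ t, ∃ b ∈ t, ∃ c ∈ t, a < b ∧ b < c := by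
  obtain ⟨c, hc, hle⟩ := exists_forall_le_of_isChain ht (card_pos.1 (by omega))
  have hcard : #(t.erase c) = #t - 1 := card_erase_of_mem hc
  obtain ⟨b, hb, hle'⟩ := exists_forall_le_of_isChain (ht.mono (erase_subset c t))
    (card_pos.1 (by omega))
  obtain ⟨a, ha⟩ : ((t.erase c).erase b).Nonempty := by
    rw [← card_pos, card_erase_of_mem hb]; omega
  exact ⟨a, mem_of_mem_erase (mem_of_mem_erase ha), b, mem_of_mem_erase hb, c, hc,
    (hle' a (mem_of_mem_erase ha)).lt_of_ne (ne_of_mem_erase ha),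
    (hle b (mem_of_mem_erase hb)).lt_of_ne (ne_of_mem_erase hb)⟩

theorem Finset.exists_lt_lt_lt_of_isChain [DecidableEq α] (ht : IsChain (· ≤ ·) (t : Set α))
    (h4 : 4 ≤ #t) : ∃ a ∈ t, ∃ b ∈ t, ∃ c ∈ t, ∃ d ∈ t, a < b ∧ b < c ∧ c < d := by
  obtain ⟨d, hd, hle⟩ := exists_forall_le_of_isChain ht (card_pos.1 (by omega))
  obtain ⟨a, ha, b, hb, c, hc, hab, hbc⟩ :=
    exists_lt_lt_of_isChain (ht.mono (erase_subset d t)) (by rw [card_erase_of_mem hd]; omega)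
  exact ⟨a, mem_of_mem_erase ha, b, mem_of_mem_erase hb, c, mem_of_mem_erase hc, d, hd, hab, hbc,
    (hle c (mem_of_mem_erase hc)).lt_of_ne (ne_of_mem_erase hc)⟩

end Chain

section Counting

variable {ι X : Type*} [Fintype X] [DecidableEq X] {H : Finset ι}

theorem card_add_card_fiber_eq_one_le (s : ι → X) (hs : ∀ x, #{a ∈ H | s a = x} ≤ 3) :
    #H + #{x | #{a ∈ H | s a = x} = 1} ≤ 2 * Fintype.card X + #{x | 3 ≤ #{a ∈ H | s a = x}} :=
  calc #H + #{x | #{a ∈ H | s a = x} = 1}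
      = ∑ x, (#{a ∈ H | s a = x} + if #{a ∈ H | s a = x} = 1 then 1 else 0) := by
        rw [sum_add_distrib, ← card_eq_sum_card_fiberwise fun a _ => mem_univ (s a),
          card_filter]
    _ ≤ ∑ x, (2 + if 3 ≤ #{a ∈ H | s a = x} then 1 else 0) :=
        sum_le_sum fun x _ => by have := hs x; split_ifs <;> omega
    _ = 2 * Fintype.card X + #{x | 3 ≤ #{a ∈ H | s a = x}} := by
        rw [sum_add_distrib, sum_const, card_univ, smul_eq_mul, mul_comm, card_filter]

theorem card_fiber_ge_three_le (s e : ι → X)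
    (hs : ∀ x, 3 ≤ #{a ∈ H | s a = x} → ∃ b ∈ H, s b = x ∧ ∀ a ∈ H, e a = e b → a = b) :
    #{x | 3 ≤ #{a ∈ H | s a = x}} ≤ #{y | #{a ∈ H | e a = y} = 1} := by
  classical
  set Q := {b ∈ H | ∀ a ∈ H, e a = e b → a = b}
  calc #{x | 3 ≤ #{a ∈ H | s a = x}}
      ≤ #(Q.image s) := card_le_card fun x hx => by
        obtain ⟨b, hb, rfl, hu⟩ := hs x (mem_filter.1 hx).2
        exact mem_image_of_mem s (mem_filter.2 ⟨hb, hu⟩)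
    _ ≤ #Q := card_image_le
    _ ≤ #{y | #{a ∈ H | e a = y} = 1} := by
      refine card_le_card_of_injOn e (fun b hb => ?_) fun b hb b' hb' hbb' => ?_
      · obtain ⟨hbH, hu⟩ := mem_filter.1 hb
        refine mem_filter.2 ⟨mem_univ _, card_eq_one.2 ⟨b, eq_singleton_iff_unique_mem.2
          ⟨mem_filter.2 ⟨hbH, rfl⟩, fun a ha => hu a (mem_filter.1 ha).1 (mem_filter.1 ha).2⟩⟩⟩
      · exact (mem_filter.1 hb').2 b (mem_filter.1 hb).1 hbb'

theorem card_le_two_mul_of_fibers (s e : ι → X)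
    (hs3 : ∀ x, #{a ∈ H | s a = x} ≤ 3) (he3 : ∀ y, #{a ∈ H | e a = y} ≤ 3)
    (hs : ∀ x, 3 ≤ #{a ∈ H | s a = x} → ∃ b ∈ H, s b = x ∧ ∀ a ∈ H, e a = e b → a = b)
    (he : ∀ y, 3 ≤ #{a ∈ H | e a = y} → ∃ b ∈ H, e b = y ∧ ∀ a ∈ H, s a = s b → a = b) :
    #H ≤ 2 * Fintype.card X := by
  have := card_add_card_fiber_eq_one_le s hs3
  have := card_add_card_fiber_eq_one_le e he3
  have := card_fiber_ge_three_le s e hs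
  have := card_fiber_ge_three_le e s he
  omega

end Counting

section StarFree

variable {α : Type*} [Lattice α]

def StarFree (H : Finset α) : Prop :=
  ∀ A ∈ H, ∀ B ∈ H, ∀ C ∈ H, ∀ D ∈ H,
    A ≠ B → A ≠ C → A ≠ D → B ≠ C → B ≠ D → C ≠ D → ¬ (A ⊔ B ≤ C ⊓ D)

variable [DecidableEq α] {H t : Finset α}

theorem StarFree.card_le_three_of_isChain (hH : StarFree H) (htH : t ⊆ H)
    (ht : IsChain (· ≤ ·) (t : Set α)) : #t ≤ 3 := by
  by_contra! h
  obtain ⟨a, ha, b, hb, c, hc, d, hd, hab, hbc, hcd⟩ := exists_lt_lt_lt_of_isChain ht h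
  exact hH a (htH ha) b (htH hb) c (htH hc) d (htH hd) hab.ne (hab.trans hbc).ne
    (hab.trans (hbc.trans hcd)).ne hbc.ne (hbc.trans hcd).ne hcd.ne
    (sup_le (le_inf (hab.trans hbc).le (hab.trans (hbc.trans hcd)).le)
      (le_inf hbc.le (hbc.trans hcd).le))

/-- The witness is the middle member of a three-element chain in `t`. -/
theorem StarFree.exists_forall_eq_of_isChain {X : Type*} (hH : StarFree H) (e : α → X)
    (he : ∀ a ∈ H, ∀ b ∈ H, e a = e b → a ≤ b ∨ b ≤ a) (htH : t ⊆ H)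
    (ht : IsChain (· ≤ ·) (t : Set α)) (hinj : Set.InjOn e t) (h3 : 3 ≤ #t) :
    ∃ b ∈ t, ∀ a ∈ H, e a = e b → a = b := by
  obtain ⟨a, ha, b, hb, c, hc, hab, hbc⟩ := exists_lt_lt_of_isChain ht h3
  refine ⟨b, hb, fun j hj hje => ?_⟩
  by_contra hjb
  have hja : j ≠ a := by rintro rfl; exact hab.ne (hinj ha hb hje)
  have hjc : j ≠ c := by rintro rfl; exact hbc.ne' (hinj hc hb hje)
  rcases he j hj b (htH hb) hje with hle | hle
  · exact hH a (htH ha) j hj b (htH hb) c (htH hc) hja.symm hab.ne (hab.trans hbc).ne hjb hjc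
      hbc.ne (sup_le (le_inf hab.le (hab.trans hbc).le) (le_inf hle (hle.trans hbc.le)))
  · exact hH a (htH ha) b (htH hb) j hj c (htH hc) hab.ne hja.symm (hab.trans hbc).ne
      (Ne.symm hjb) hbc.ne hjc
      (sup_le (le_inf (hab.le.trans hle) (hab.trans hbc).le) (le_inf hle hbc.le))

theorem StarFree.card_le_two_mul {X : Type*} [Fintype X] [DecidableEq X] (hH : StarFree H)
    (s e : α → X) (hs : ∀ a ∈ H, ∀ b ∈ H, s a = s b → a ≤ b ∨ b ≤ a)
    (he : ∀ a ∈ H, ∀ b ∈ H, e a = e b → a ≤ b ∨ b ≤ a)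
    (hse : ∀ a ∈ H, ∀ b ∈ H, s a = s b → e a = e b → a = b) :
    #H ≤ 2 * Fintype.card X := by
  have chain {f : α → X} (hf : ∀ a ∈ H, ∀ b ∈ H, f a = f b → a ≤ b ∨ b ≤ a) (x : X) :
      IsChain (· ≤ ·) (↑({a ∈ H | f a = x} : Finset α) : Set α) := fun a ha b hb _ => by
    rw [mem_coe, mem_filter] at ha hb
    exact hf a ha.1 b hb.1 (ha.2.trans hb.2.symm)
  have inj {f g : α → X} (hfg : ∀ a ∈ H, ∀ b ∈ H, f a = f b → g a = g b → a = b) (x : X) :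
      Set.InjOn g (↑({a ∈ H | f a = x} : Finset α) : Set α) := fun a ha b hb hab => by
    rw [mem_coe, mem_filter] at ha hb
    exact hfg a ha.1 b hb.1 (ha.2.trans hb.2.symm) hab
  have hes : ∀ a ∈ H, ∀ b ∈ H, e a = e b → s a = s b → a = b :=
    fun a ha b hb h h' => hse a ha b hb h' h
  exact card_le_two_mul_of_fibers s e
    (fun x => hH.card_le_three_of_isChain (filter_subset _ H) (chain hs x))
    (fun y => hH.card_le_three_of_isChain (filter_subset _ H) (chain he y))
    (fun x h3 => by
      obtain ⟨b, hb, hu⟩ := hH.exists_forall_eq_of_isChain e he (filter_subset _ H) (chain hs x)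
        (inj hse x) h3
      exact ⟨b, (mem_filter.1 hb).1, (mem_filter.1 hb).2, hu⟩)
    (fun y h3 => by
      obtain ⟨b, hb, hu⟩ := hH.exists_forall_eq_of_isChain s hs (filter_subset _ H) (chain he y)
        (inj hes y) h3
      exact ⟨b, (mem_filter.1 hb).1, (mem_filter.1 hb).2, hu⟩)

end StarFree

section Arc

variable {n : ℕ} [NeZero n]

def arc (k : ZMod n) (m : ℕ) : Finset (ZMod n) := {x | (x - k).val < m}

theorem mem_arc {k x : ZMod n} {m : ℕ} : x ∈ arc k m ↔ (x - k).val < m := by simp [arc]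

theorem arc_mono (k : ZMod n) : Monotone (arc k) :=
  fun _ _ h _ hx => mem_arc.2 ((mem_arc.1 hx).trans_le h)

theorem image_range_eq_arc (k : ZMod n) (m : ℕ) :
    (range m).image (fun i : ℕ => k + (i : ZMod n)) = arc k (min m n) := by
  ext x
  simp only [mem_image, mem_range, mem_arc, lt_min_iff, ZMod.val_lt, and_true]
  constructor
  · rintro ⟨i, hi, rfl⟩
    rw [add_sub_cancel_left, ZMod.val_natCast]
    exact (Nat.mod_le i n).trans_lt hi
  · exact fun hx => ⟨(x - k).val, hx, by rw [ZMod.natCast_zmod_val, add_sub_cancel]⟩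

theorem card_arc (k : ZMod n) {m : ℕ} (hm : m ≤ n) : #(arc k m) = m := by
  have himage := image_range_eq_arc k m
  rw [min_eq_left hm] at himage
  rw [← himage, card_image_of_injOn, card_range]
  intro i hi j hj hij
  simp only [coe_range, Set.mem_Iio] at hi hj
  have := congrArg ZMod.val (add_left_cancel hij)
  rwa [ZMod.val_cast_of_lt (by omega), ZMod.val_cast_of_lt (by omega)] at this

theorem IsCyclicInterval.exists_eq_arc {S : Finset (ZMod n)} (h : IsCyclicInterval n S) :
    ∃ k, S = arc k #S := by
  obtain ⟨k, m, rfl⟩ := h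
  rw [image_range_eq_arc, card_arc k (min_le_right m n)]
  exact ⟨k, rfl⟩

/-- Arcs with the same last point `k + (m - 1)` are nested. -/
theorem arc_subset_arc_of_add_eq {k k' : ZMod n} {m m' : ℕ} (hm : 0 < m) (hmm' : m ≤ m')
    (h : k + ((m - 1 : ℕ) : ZMod n) = k' + ((m' - 1 : ℕ) : ZMod n)) : arc k m ⊆ arc k' m' := by
  have hk : k' = k - ((m' - m : ℕ) : ZMod n) := by
    have : ((m' - 1 : ℕ) : ZMod n) = ((m - 1 : ℕ) : ZMod n) + ((m' - m : ℕ) : ZMod n) := by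
      rw [← Nat.cast_add]; congr 1; omega
    rw [this] at h
    linear_combination -h
  intro x hx
  rw [mem_arc] at hx ⊢
  calc (x - k').val = (x - k + ((m' - m : ℕ) : ZMod n)).val := by rw [hk]; ring_nf
    _ ≤ (x - k).val + ((m' - m : ℕ) : ZMod n).val := ZMod.val_add_le _ _
    _ < m' := by rw [ZMod.val_natCast]; have := Nat.mod_le (m' - m) n; omega

end Arc

theorem stmt_3_general (n : ℕ) [NeZero n] (H : Finset (Finset (ZMod n)))
    (hint : ∀ S ∈ H, IsCyclicInterval n S)
    (hempty : ∅ ∉ H)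
    (hstar : ∀ A ∈ H, ∀ B ∈ H, ∀ C ∈ H, ∀ D ∈ H,
      A ≠ B → A ≠ C → A ≠ D → B ≠ C → B ≠ D → C ≠ D → ¬ (A ∪ B ⊆ C ∩ D)) :
    H.card ≤ 2 * n := by
  classical
  choose! first hfirst using fun S hS => (hint S hS).exists_eq_arc
  have hpos : ∀ S ∈ H, 0 < #S := fun S hS =>
    card_pos.2 (nonempty_iff_ne_empty.2 fun h => hempty (h ▸ hS))
  have hle : ∀ S ∈ H, #S ≤ n := fun S _ => (card_le_univ S).trans_eq (ZMod.card n)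
  let last (S : Finset (ZMod n)) : ZMod n := first S + ((#S - 1 : ℕ) : ZMod n)
  refine (StarFree.card_le_two_mul hstar first last ?_ ?_ ?_).trans_eq (by rw [ZMod.card])
  · intro S hS S' hS' h
    rw [hfirst S hS, hfirst S' hS', h]
    exact (le_total _ _).imp (arc_mono _ ·) (arc_mono _ ·)
  · intro S hS S' hS' h
    rw [hfirst S hS, hfirst S' hS']
    exact (le_total #S #S').imp (arc_subset_arc_of_add_eq (hpos S hS) · h)
      (arc_subset_arc_of_add_eq (hpos S' hS') · h.symm)
  · intro S hS S' hS' h h'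
    change first S + _ = first S' + _ at h'
    rw [h] at h'
    have hcast := congrArg ZMod.val (add_left_cancel h')
    have := hle S hS; have := hle S' hS'; have := hpos S hS; have := hpos S' hS'
    rw [ZMod.val_cast_of_lt (by omega), ZMod.val_cast_of_lt (by omega)] at hcast
    have hcard : #S = #S' := by omega
    rw [hfirst S hS, hfirst S' hS', h, hcard]

theorem stmt_3 (n : ℕ) [NeZero n] (hn : 3 ≤ n) (H : Finset (Finset (ZMod n)))
    (hint : ∀ S ∈ H, IsCyclicInterval n S)
    (hempty : ∅ ∉ H) (hfull : (Finset.univ : Finset (ZMod n)) ∉ H)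
    (hstar : ∀ A ∈ H, ∀ B ∈ H, ∀ C ∈ H, ∀ D ∈ H,
      A ≠ B → A ≠ C → A ≠ D → B ≠ C → B ≠ D → C ≠ D → ¬ (A ∪ B ⊆ C ∩ D)) :
    H.card ≤ 2 * n :=
  stmt_3_general n H hint hempty hstar
end

section
/- Let Ĥ be a family of intervals modulo n (n ≥ 3), with ∅ ∉ Ĥ and Z/nZ ∉ Ĥ, such that every member of Ĥ contains at most one other member of Ĥ. If m is the number of minimal members and a the number of non-minimal members, then m + a/2 ≤ n. -/
namespace Stmt4Aux

variable {n : ℕ} [NeZero n]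

/-- The cyclic interval starting at `k` of length `m`. -/
def I (k : ZMod n) (m : ℕ) : Finset (ZMod n) :=
  (Finset.range m).image (fun i : ℕ => k + (i : ZMod n))

lemma I_univ (k : ZMod n) {m : ℕ} (hm : n ≤ m) : I k m = Finset.univ := by
  apply Finset.eq_univ_of_forall
  intro x
  simp only [I, Finset.mem_image, Finset.mem_range]
  exact ⟨(x - k).val, lt_of_lt_of_le (ZMod.val_lt _) hm, by
    rw [ZMod.natCast_rightInverse (x - k)]; ring⟩

lemma I_mono (k : ZMod n) {m m' : ℕ} (h : m ≤ m') : I k m ⊆ I k m' :=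
  Finset.image_subset_image (Finset.range_subset_range.mpr h)

lemma I_rev (k : ZMod n) {m : ℕ} (hm : 1 ≤ m) :
    I k m = (Finset.range m).image
      (fun i : ℕ => (k + ((m - 1 : ℕ) : ZMod n)) - (i : ZMod n)) := by
  ext x
  simp only [I, Finset.mem_image, Finset.mem_range]
  constructor
  · rintro ⟨i, hi, rfl⟩
    refine ⟨m - 1 - i, by omega, ?_⟩
    have h1 : ((m - 1 - i : ℕ) : ZMod n) + (i : ZMod n) = ((m - 1 : ℕ) : ZMod n) := by
      rw [← Nat.cast_add]; congr 1; omega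
    linear_combination -h1
  · rintro ⟨i, hi, rfl⟩
    refine ⟨m - 1 - i, by omega, ?_⟩
    have h1 : ((m - 1 - i : ℕ) : ZMod n) + ((m - 1 - (m - 1 - i) : ℕ) : ZMod n)
        = ((m - 1 : ℕ) : ZMod n) := by
      rw [← Nat.cast_add]; congr 1; omega
    have h2 : (m - 1 - (m - 1 - i) : ℕ) = i := by omega
    rw [h2] at h1
    linear_combination h1

lemma natCast_inj {a b : ℕ} (ha : a < n) (hb : b < n) (h : (a : ZMod n) = b) : a = b := by
  have h1 := ZMod.val_cast_of_lt ha
  have h2 := ZMod.val_cast_of_lt hb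
  rw [← h1, ← h2, h]

end Stmt4Aux

theorem stmt_4 (n : ℕ) [NeZero n] (hn : 3 ≤ n) (H : Finset (Finset (ZMod n)))
    (hint : ∀ S ∈ H, IsCyclicInterval n S)
    (hempty : ∅ ∉ H) (hfull : (Finset.univ : Finset (ZMod n)) ∉ H)
    (hone : ∀ S ∈ H, (H.filter (fun T => T ⊂ S)).card ≤ 1) :
    ((H.filter (fun S => ∀ T ∈ H, ¬ T ⊂ S)).card : ℚ)
      + ((H.filter (fun S => ∃ T ∈ H, T ⊂ S)).card : ℚ) / 2 ≤ n := by
  classical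
  -- canonical representation of each member of H
  have hrep : ∀ S : Finset (ZMod n), ∃ k : ZMod n, ∃ m : ℕ,
      1 ≤ m ∧ m < n ∧ (S ∈ H → S = Stmt4Aux.I k m) := by
    intro S
    by_cases hS : S ∈ H
    · obtain ⟨k, m, hkm⟩ := hint S hS
      have hSI : S = Stmt4Aux.I k m := hkm
      have hm1 : 1 ≤ m := by
        rcases Nat.eq_zero_or_pos m with h0 | h
        · exfalso; apply hempty
          have : S = ∅ := by simp [hSI, Stmt4Aux.I, h0]
          rwa [this] at hS
        · exact h
      have hmn : m < n := by
        by_contra h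
        push_neg at h
        apply hfull
        rwa [hSI, Stmt4Aux.I_univ k h] at hS
      exact ⟨k, m, hm1, hmn, fun _ => hSI⟩
    · exact ⟨0, 1, le_refl 1, by omega, fun h => absurd h hS⟩
  choose st len hlen1 hlen2 hI using hrep
  set Min := H.filter (fun S => ∀ T ∈ H, ¬ T ⊂ S) with hMinDef
  set NMin := H.filter (fun S => ∃ T ∈ H, T ⊂ S) with hNMinDef
  -- the "end" of an interval
  set ep : Finset (ZMod n) → ZMod n := fun S => st S + ((len S - 1 : ℕ) : ZMod n) with hepDef
  -- same start ⇒ comparable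
  have F3s : ∀ S ∈ H, ∀ T ∈ H, st S = st T → S ⊆ T ∨ T ⊆ S := by
    intro S hS T hT h
    rcases le_total (len S) (len T) with hl | hl
    · left; rw [hI S hS, hI T hT, h]; exact Stmt4Aux.I_mono _ hl
    · right; rw [hI S hS, hI T hT, h]; exact Stmt4Aux.I_mono _ hl
  -- same end ⇒ comparable
  have F3e : ∀ S ∈ H, ∀ T ∈ H, ep S = ep T → S ⊆ T ∨ T ⊆ S := by
    intro S hS T hT h
    have hrS := (hI S hS).trans (Stmt4Aux.I_rev (st S) (hlen1 S))
    have hrT := (hI T hT).trans (Stmt4Aux.I_rev (st T) (hlen1 T))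
    have hes : st S + ((len S - 1 : ℕ) : ZMod n) = st T + ((len T - 1 : ℕ) : ZMod n) := h
    rcases le_total (len S) (len T) with hl | hl
    · left; rw [hrS, hrT, hes]
      exact Finset.image_subset_image (Finset.range_subset_range.mpr hl)
    · right; rw [hrS, hrT, ← hes]
      exact Finset.image_subset_image (Finset.range_subset_range.mpr hl)
  -- same start and end ⇒ equal
  have F2 : ∀ S ∈ H, ∀ T ∈ H, st S = st T → ep S = ep T → S = T := by
    intro S hS T hT h1 h2
    have h3 : ((len S - 1 : ℕ) : ZMod n) = ((len T - 1 : ℕ) : ZMod n) := by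
      have := h2
      simp only [hepDef, h1] at this
      exact add_left_cancel this
    have h4 : len S - 1 = len T - 1 :=
      Stmt4Aux.natCast_inj (by have := hlen2 S; omega) (by have := hlen2 T; omega) h3
    have h5 : len S = len T := by have := hlen1 S; have := hlen1 T; omega
    rw [hI S hS, hI T hT, h1, h5]
  -- uniqueness of contained member
  have huniq : ∀ B ∈ H, ∀ T1 ∈ H, ∀ T2 ∈ H, T1 ⊂ B → T2 ⊂ B → T1 = T2 := by
    intro B hB T1 h1 T2 h2 s1 s2
    exact Finset.card_le_one.mp (hone B hB) T1 (Finset.mem_filter.mpr ⟨h1, s1⟩)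
      T2 (Finset.mem_filter.mpr ⟨h2, s2⟩)
  -- token map
  set cond : Finset (ZMod n) → Prop := fun S => ∃ T ∈ H, T ⊂ S ∧ st T = st S with hcondDef
  set f : Finset (ZMod n) × Bool → ZMod n ⊕ ZMod n := fun p =>
    if p.2 = true then Sum.inr (ep p.1)
    else if cond p.1 then Sum.inr (ep p.1) else Sum.inl (st p.1) with hfDef
  set K : Finset (Finset (ZMod n) × Bool) :=
    Min ×ˢ (Finset.univ : Finset Bool) ∪ NMin ×ˢ ({false} : Finset Bool) with hKDef
  -- facts about membership in K
  have hKfact : ∀ p ∈ K, p.1 ∈ H ∧ (p.2 = true → ∀ T ∈ H, ¬ T ⊂ p.1)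
      ∧ ((∃ T ∈ H, T ⊂ p.1) → p.2 = false) := by
    intro p hp
    rw [hKDef, Finset.mem_union, Finset.mem_product, Finset.mem_product] at hp
    rcases hp with ⟨hp1, _⟩ | ⟨hp1, hp2⟩
    · rw [hMinDef, Finset.mem_filter] at hp1
      refine ⟨hp1.1, fun _ => hp1.2, fun ⟨T, hT, hTS⟩ => absurd hTS (hp1.2 T hT)⟩
    · rw [hNMinDef, Finset.mem_filter] at hp1
      simp only [Finset.mem_singleton] at hp2
      exact ⟨hp1.1, fun h => by simp [hp2] at h, fun _ => hp2⟩
  -- characterization of f values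
  have claimL : ∀ p ∈ K, ∀ k, f p = Sum.inl k →
      p.2 = false ∧ st p.1 = k ∧ ¬ cond p.1 := by
    intro p hp k hfp
    rw [hfDef] at hfp
    by_cases hb : p.2 = true
    · simp [hb] at hfp
    · by_cases hc : cond p.1
      · simp [hb, hc] at hfp
      · simp [hb, hc] at hfp
        exact ⟨by simpa using hb, hfp, hc⟩
  have claimR : ∀ p ∈ K, ∀ k, f p = Sum.inr k →
      ep p.1 = k ∧ (p.2 = false → cond p.1) := by
    intro p hp k hfp
    rw [hfDef] at hfp
    by_cases hb : p.2 = true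
    · simp [hb] at hfp
      exact ⟨hfp, fun h => by simp [hb] at h⟩
    · by_cases hc : cond p.1
      · simp [hb, hc] at hfp
        exact ⟨hfp, fun _ => hc⟩
      · simp [hb, hc] at hfp
  -- injectivity
  have hinj : Set.InjOn f ↑K := by
    intro p hp q hq hfpq
    simp only [Finset.mem_coe] at hp hq
    obtain ⟨hpH, hpMin, hpNMin⟩ := hKfact p hp
    obtain ⟨hqH, hqMin, hqNMin⟩ := hKfact q hq
    rcases hv : f p with k | k
    · -- start slot
      obtain ⟨hb, hst, hnc⟩ := claimL p hp k hv
      obtain ⟨hb', hst', hnc'⟩ := claimL q hq k (hfpq ▸ hv)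
      by_cases hSS : p.1 = q.1
      · exact Prod.ext hSS (hb.trans hb'.symm)
      · exfalso
        rcases F3s p.1 hpH q.1 hqH (hst.trans hst'.symm) with hsub | hsub
        · exact hnc' ⟨p.1, hpH, Finset.ssubset_iff_subset_ne.mpr ⟨hsub, hSS⟩,
            hst.trans hst'.symm⟩
        · exact hnc ⟨q.1, hqH, Finset.ssubset_iff_subset_ne.mpr ⟨hsub, fun h => hSS h.symm⟩,
            hst'.trans hst.symm⟩
    · -- end slot
      obtain ⟨hep, hcp⟩ := claimR p hp k hv
      obtain ⟨hep', hcp'⟩ := claimR q hq k (hfpq ▸ hv)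
      by_cases hSS : p.1 = q.1
      · refine Prod.ext hSS ?_
        rcases Bool.eq_false_or_eq_true p.2 with hb | hb <;>
          rcases Bool.eq_false_or_eq_true q.2 with hb' | hb'
        · rw [hb, hb']
        · exfalso
          obtain ⟨T, hT, hTq, _⟩ := hcp' hb'
          exact hpMin hb T hT (hSS ▸ hTq : T ⊂ p.1)
        · exfalso
          obtain ⟨T, hT, hTp, _⟩ := hcp hb
          exact hqMin hb' T hT (hSS ▸ hTp)
        · rw [hb, hb']
      · exfalso
        have hst : st p.1 = st q.1 := by
          rcases F3e p.1 hpH q.1 hqH (hep.trans hep'.symm) with hsub | hsub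
          · have hpq : p.1 ⊂ q.1 := Finset.ssubset_iff_subset_ne.mpr ⟨hsub, hSS⟩
            have hb' : q.2 = false := hqNMin ⟨p.1, hpH, hpq⟩
            obtain ⟨T, hT, hTq, hTst⟩ := hcp' hb'
            have hTeq : T = p.1 := huniq q.1 hqH T hT p.1 hpH hTq hpq
            rw [← hTeq, hTst]
          · have hqp : q.1 ⊂ p.1 := Finset.ssubset_iff_subset_ne.mpr ⟨hsub, fun h => hSS h.symm⟩
            have hb : p.2 = false := hpNMin ⟨q.1, hqH, hqp⟩
            obtain ⟨T, hT, hTp, hTst⟩ := hcp hb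
            have hTeq : T = q.1 := huniq p.1 hpH T hT q.1 hqH hTp hqp
            rw [← hTst, hTeq]
        exact hSS (F2 p.1 hpH q.1 hqH hst (hep.trans hep'.symm))
  -- cardinality of K
  have hdisj : Disjoint (Min ×ˢ (Finset.univ : Finset Bool)) (NMin ×ˢ ({false} : Finset Bool)) := by
    rw [Finset.disjoint_left]
    rintro p hp hq
    rw [Finset.mem_product] at hp hq
    rw [hMinDef, Finset.mem_filter] at hp
    rw [hNMinDef, Finset.mem_filter] at hq
    obtain ⟨T, hT, hTp⟩ := hq.1.2
    exact hp.1.2 T hT hTp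
  have hKcard : K.card = 2 * Min.card + NMin.card := by
    rw [hKDef, Finset.card_union_of_disjoint hdisj, Finset.card_product, Finset.card_product]
    simp [mul_comm]
  have hle : K.card ≤ 2 * n := by
    have h1 := Finset.card_le_card_of_injOn f (fun p _ => Finset.mem_univ (f p)) hinj
    have h2 : (Finset.univ : Finset (ZMod n ⊕ ZMod n)).card = 2 * n := by
      rw [Finset.card_univ, Fintype.card_sum, ZMod.card]; ring
    omega
  have hfinal : 2 * Min.card + NMin.card ≤ 2 * n := by omega
  have hQ : (2 * Min.card + NMin.card : ℚ) ≤ 2 * n := by exact_mod_cast hfinal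
  push_cast at hQ
  linarith
end

section
/- Let M and A be two disjoint antichains in the power set of {1,...,n} with {1,...,n} ∉ M, and suppose that for every A ∈ A there is a unique M ∈ M with A ⊂ M (proper containment); write f(A) for this unique M. Then Σ_{M∈M} 1/C(n,|M|) + Σ_{A∈A} (1/C(n,|A|))·(1 − 1/(n−|A|)) ≤ 1. -/
/-!
Double counting over the `n!` maximal chains `∅ ⊂ {σ 0} ⊂ {σ 0, σ 1} ⊂ ⋯` of subsets of `Fin n`,
one for each permutation `σ`. A set of size `k` lies on `k! (n - k)!` of them, so `1 / C(n, k)` is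
the proportion of chains through it. A chain meets each antichain at most once, and if it meets
both `S ∈ A` and `T ∈ M`, then `S ⊂ T` (as `T ⊆ S ⊂ f S` is impossible in the antichain `M`), so
`T = f S`. Hence each chain passes through at most `1 + #{S ∈ A | S, f S on the chain}` members of
`M ∪ A`. Finally, a chain through `S` goes on through `f S` with probability
`1 / C(n - |S|, |f S| - |S|) ≤ 1 / (n - |S|)`, because `|S| < |f S| < n`.
-/

open Finset Equiv Nat

theorem Finset.map_equiv_eq_iff {α β : Type*} {e : α ≃ β} {U' : Finset α} {U : Finset β} :
    U'.map e.toEmbedding = U ↔ ∀ x, x ∈ U' ↔ e x ∈ U := by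
  rw [Finset.ext_iff, ← e.forall_congr_right]
  simp

section Fibers
variable {α ι : Type*} [Fintype α] [DecidableEq α]

theorem Equiv.Perm.card_comp_eq_of_card_fiber_eq [Fintype ι] [DecidableEq ι] {c d : α → ι}
    (h : ∀ i, Fintype.card {a // c a = i} = Fintype.card {a // d a = i}) :
    Fintype.card {σ : Perm α // d ∘ σ = c} = ∏ i, (Fintype.card {a // c a = i})! := by
  let τ : Perm α := ofFiberEquiv fun i ↦ Fintype.equivOfCardEq (h i)
  have hτ : d ∘ τ = c := funext (ofFiberEquiv_map _)
  rw [← DomMulAct.stabilizer_card]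
  refine Fintype.card_congr (subtypeEquiv (Equiv.mulLeft τ⁻¹) fun σ ↦ ?_)
  rw [← hτ]
  constructor <;> intro hσ <;> funext a
  · simpa using congrFun hσ a
  · simpa using congrFun hσ a

theorem card_fiber_mem_mem {U V : Finset α} (hUV : U ⊆ V) (p q : Bool) :
    Fintype.card {x // (decide (x ∈ U), decide (x ∈ V)) = (p, q)} =
      if p then (if q then #U else 0) else (if q then #V - #U else Fintype.card α - #V) := by
  rw [Fintype.card_subtype]
  cases p <;> cases q <;> simp only [Prod.mk.injEq, decide_eq_true_eq, decide_eq_false_iff_not,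
    if_true, if_false, Bool.false_eq_true]
  · rw [← card_compl]; congr 1; ext x
    simp only [mem_filter, mem_univ, true_and, mem_compl]; grind
  · rw [← card_sdiff_of_subset hUV]; congr 1; ext x
    simp only [mem_filter, mem_univ, true_and, mem_sdiff]; grind
  · simp only [Finset.card_eq_zero, filter_eq_empty_iff]; grind
  · congr 1; ext x; simp only [mem_filter, mem_univ, true_and]; grind

theorem card_perm_map_eq_map_eq {U V U' V' : Finset α} (hUV : U ⊆ V) (hUV' : U' ⊆ V')
    (hU : #U' = #U) (hV : #V' = #V) :
    #{σ : Perm α | U'.map σ.toEmbedding = U ∧ V'.map σ.toEmbedding = V} =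
      (#U)! * (#V - #U)! * (Fintype.card α - #V)! := by
  let level (W W' : Finset α) (x : α) : Bool × Bool := (decide (x ∈ W), decide (x ∈ W'))
  have hlevel (σ : Perm α) : (U'.map σ.toEmbedding = U ∧ V'.map σ.toEmbedding = V) ↔
      level U V ∘ σ = level U' V' := by
    rw [@eq_comm _ (level U V ∘ σ)]
    simp only [map_equiv_eq_iff, funext_iff, Function.comp, level, Prod.mk.injEq,
      decide_eq_decide, forall_and]
  rw [← Fintype.card_subtype, Fintype.card_congr (subtypeEquivRight hlevel),
    Perm.card_comp_eq_of_card_fiber_eq fun ⟨p, q⟩ ↦ by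
      simp only [level, card_fiber_mem_mem hUV, card_fiber_mem_mem hUV', hU, hV]]
  simp [level, Fintype.prod_prod_type, card_fiber_mem_mem hUV', hU, hV, mul_assoc]

end Fibers

theorem Nat.add_le_choose_add {a b : ℕ} (ha : 0 < a) (hb : 0 < b) :
    a + b ≤ (a + b).choose a := by
  induction b, hb using Nat.le_induction with
  | base => rw [Nat.choose_succ_self_right]
  | succ b _ ih =>
    obtain ⟨a, rfl⟩ : ∃ a', a = a' + 1 := ⟨a - 1, by omega⟩
    rw [show a + 1 + (b + 1) = (a + 1 + b) + 1 by omega, Nat.choose_succ_succ']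
    have : 0 < (a + 1 + b).choose a := Nat.choose_pos (by omega)
    omega

theorem card_filter_mem_add_card_filter_mem_le {β : Type*} [PartialOrder β] {C : Set β}
    [DecidablePred (· ∈ C)] (hC : IsChain (· ≤ ·) C) {M A : Finset β}
    (hM : IsAntichain (· ≤ ·) (M : Set β)) (hA : IsAntichain (· ≤ ·) (A : Set β))
    (hMA : Disjoint M A) {f : β → β}
    (hf : ∀ S ∈ A, f S ∈ M ∧ S < f S ∧ ∀ T ∈ M, S < T → T = f S) :
    #{T ∈ M | T ∈ C} + #{S ∈ A | S ∈ C} ≤ 1 + #{S ∈ A | S ∈ C ∧ f S ∈ C} := by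
  have card_le_one_of_isAntichain {F : Finset β} (hF : IsAntichain (· ≤ ·) (F : Set β)) :
      #{T ∈ F | T ∈ C} ≤ 1 :=
    card_le_one.2 fun S hS T hT ↦ inter_subsingleton_of_isChain_of_isAntichain hC hF
      ⟨(mem_filter.1 hS).2, (mem_filter.1 hS).1⟩ ⟨(mem_filter.1 hT).2, (mem_filter.1 hT).1⟩
  have hMC := card_le_one_of_isAntichain hM
  have hAC := card_le_one_of_isAntichain hA
  obtain hA₀ | ⟨S, hS⟩ := ({S ∈ A | S ∈ C}).eq_empty_or_nonempty
  · rw [hA₀, card_empty]; omega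
  obtain hM₀ | ⟨T, hT⟩ := ({T ∈ M | T ∈ C}).eq_empty_or_nonempty
  · rw [hM₀, card_empty]; omega
  rw [mem_filter] at hS hT
  obtain ⟨hfSM, hSfS, hfS_unique⟩ := hf S hS.1
  have hST : S ≠ T := fun h ↦ disjoint_left.1 hMA hT.1 (h ▸ hS.1)
  have hTfS : T = f S := by
    rcases hC.total hS.2 hT.2 with h | h
    · exact hfS_unique T hT.1 (h.lt_of_ne hST)
    · exact hM.eq hT.1 hfSM (h.trans hSfS.le)
  have : 0 < #{S ∈ A | S ∈ C ∧ f S ∈ C} :=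
    card_pos.2 ⟨S, mem_filter.2 ⟨hS.1, hS.2, hTfS ▸ hT.2⟩⟩
  omega

section PrefixChain
variable {n : ℕ}

/-- The maximal chain `∅ ⊂ {σ 0} ⊂ {σ 0, σ 1} ⊂ ⋯`: its member of size `k` is the image of the
first `k` indices. -/
def prefixChain (σ : Perm (Fin n)) : Set (Finset (Fin n)) :=
  {S | ({i | (i : ℕ) < #S} : Finset (Fin n)).map σ.toEmbedding = S}

instance (σ : Perm (Fin n)) : DecidablePred (· ∈ prefixChain σ) :=
  fun S ↦ inferInstanceAs (Decidable (_ = S))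

theorem card_filter_val_lt_of_le {k : ℕ} (hk : k ≤ n) :
    #({i | (i : ℕ) < k} : Finset (Fin n)) = k := by
  rw [Fin.card_filter_val_lt]; omega

theorem filter_val_lt_mono {k l : ℕ} (hkl : k ≤ l) :
    ({i | (i : ℕ) < k} : Finset (Fin n)) ⊆ ({i | (i : ℕ) < l} : Finset (Fin n)) :=
  monotone_filter_right _ fun _ _ hi ↦ hi.trans_le hkl

theorem isChain_prefixChain (σ : Perm (Fin n)) : IsChain (· ⊆ ·) (prefixChain σ) := by
  intro S hS T hT _
  rcases le_total #S #T with h | h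
  · exact .inl (hS ▸ hT ▸ map_subset_map.2 (filter_val_lt_mono h))
  · exact .inr (hS ▸ hT ▸ map_subset_map.2 (filter_val_lt_mono h))

theorem card_mem_prefixChain_and_mem {S T : Finset (Fin n)} (hST : S ⊆ T) :
    #{σ : Perm (Fin n) | S ∈ prefixChain σ ∧ T ∈ prefixChain σ} =
      (#S)! * (#T - #S)! * (n - #T)! := by
  have h := card_perm_map_eq_map_eq hST (filter_val_lt_mono (card_le_card hST))
    (card_filter_val_lt_of_le (card_finset_fin_le S))
    (card_filter_val_lt_of_le (card_finset_fin_le T))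
  rwa [Fintype.card_fin] at h

theorem card_mem_prefixChain (S : Finset (Fin n)) :
    #{σ : Perm (Fin n) | S ∈ prefixChain σ} = (#S)! * (n - #S)! := by
  simpa using card_mem_prefixChain_and_mem (subset_refl S)

theorem one_div_choose_card_eq (S : Finset (Fin n)) :
    (1 : ℚ) / n.choose #S = #{σ : Perm (Fin n) | S ∈ prefixChain σ} / n ! := by
  rw [Nat.cast_choose ℚ (card_finset_fin_le S), one_div_div, card_mem_prefixChain, Nat.cast_mul]

theorem card_mem_prefixChain_eq_mul_choose {S T : Finset (Fin n)} (hST : S ⊆ T) :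
    #{σ : Perm (Fin n) | S ∈ prefixChain σ} =
      #{σ : Perm (Fin n) | S ∈ prefixChain σ ∧ T ∈ prefixChain σ} * (n - #S).choose (#T - #S) := by
  have hTS : #T - #S ≤ n - #S := Nat.sub_le_sub_right (card_finset_fin_le T) _
  have hnT : n - #S - (#T - #S) = n - #T := by
    have := card_le_card hST; omega
  rw [card_mem_prefixChain, card_mem_prefixChain_and_mem hST,
    ← Nat.choose_mul_factorial_mul_factorial hTS, hnT]
  ring

theorem card_mem_prefixChain_mul_one_sub_le {S T : Finset (Fin n)} (hST : S ⊂ T)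
    (hT : T ≠ univ) :
    (#{σ : Perm (Fin n) | S ∈ prefixChain σ} : ℚ) * (1 - 1 / ((n : ℚ) - #S)) ≤
      #{σ : Perm (Fin n) | S ∈ prefixChain σ} -
        #{σ : Perm (Fin n) | S ∈ prefixChain σ ∧ T ∈ prefixChain σ} := by
  have hST' : #S < #T := card_lt_card hST
  have hTn : #T < n := (card_lt_iff_ne_univ T).2 hT |>.trans_eq (Fintype.card_fin n)
  have hnat : (n - #S) * #{σ : Perm (Fin n) | S ∈ prefixChain σ ∧ T ∈ prefixChain σ} ≤
      #{σ : Perm (Fin n) | S ∈ prefixChain σ} := by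
    rw [card_mem_prefixChain_eq_mul_choose hST.subset, mul_comm]
    gcongr
    simpa [show #T - #S + (n - #T) = n - #S by omega] using
      Nat.add_le_choose_add (a := #T - #S) (b := n - #T) (by omega) (by omega)
  have hpos : (0 : ℚ) < n - #S := by
    rw [sub_pos]; exact_mod_cast hST'.trans hTn
  have : (#{σ : Perm (Fin n) | S ∈ prefixChain σ ∧ T ∈ prefixChain σ} : ℚ) ≤
      #{σ : Perm (Fin n) | S ∈ prefixChain σ} / (n - #S) := by
    rw [le_div_iff₀ hpos, mul_comm, ← Nat.cast_sub (hST'.trans hTn).le]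
    exact_mod_cast hnat
  rw [mul_one_sub, mul_one_div]
  linarith

theorem sum_card_mem_prefixChain_le {M A : Finset (Finset (Fin n))}
    (hM : IsAntichain (· ⊆ ·) (M : Set (Finset (Fin n))))
    (hA : IsAntichain (· ⊆ ·) (A : Set (Finset (Fin n)))) (hMA : Disjoint M A)
    {f : Finset (Fin n) → Finset (Fin n)}
    (hf : ∀ S ∈ A, f S ∈ M ∧ S ⊂ f S ∧ ∀ T ∈ M, S ⊂ T → T = f S) :
    ∑ T ∈ M, #{σ : Perm (Fin n) | T ∈ prefixChain σ} +
        ∑ S ∈ A, #{σ : Perm (Fin n) | S ∈ prefixChain σ} ≤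
      n ! + ∑ S ∈ A, #{σ : Perm (Fin n) | S ∈ prefixChain σ ∧ f S ∈ prefixChain σ} := by
  have swap (F : Finset (Finset (Fin n))) (P : Finset (Fin n) → Perm (Fin n) → Prop)
      [∀ S σ, Decidable (P S σ)] : ∑ S ∈ F, #{σ | P S σ} = ∑ σ, #{S ∈ F | P S σ} :=
    sum_card_bipartiteAbove_eq_sum_card_bipartiteBelow _
  rw [swap, swap, swap, ← sum_add_distrib]
  calc ∑ σ, (#{T ∈ M | T ∈ prefixChain σ} + #{S ∈ A | S ∈ prefixChain σ})
      ≤ ∑ σ : Perm (Fin n), (1 + #{S ∈ A | S ∈ prefixChain σ ∧ f S ∈ prefixChain σ}) :=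
        sum_le_sum fun σ _ ↦
          card_filter_mem_add_card_filter_mem_le (isChain_prefixChain σ) hM hA hMA hf
    _ = n ! + ∑ σ, #{S ∈ A | S ∈ prefixChain σ ∧ f S ∈ prefixChain σ} := by
        rw [sum_add_distrib, sum_const, Finset.card_univ, Fintype.card_perm, Fintype.card_fin,
          smul_eq_mul, mul_one]

end PrefixChain

theorem stmt_5 (n : ℕ) (M A : Finset (Finset (Fin n)))
    (hM : IsAntichain (· ⊆ ·) (M : Set (Finset (Fin n))))
    (hA : IsAntichain (· ⊆ ·) (A : Set (Finset (Fin n))))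
    (hdisj : Disjoint M A)
    (hfull : (Finset.univ : Finset (Fin n)) ∉ M)
    (f : Finset (Fin n) → Finset (Fin n))
    (hf : ∀ S ∈ A, f S ∈ M ∧ S ⊂ f S ∧ ∀ T ∈ M, S ⊂ T → T = f S) :
    ∑ S ∈ M, (1 : ℚ) / (n.choose S.card)
      + ∑ S ∈ A, (1 : ℚ) / (n.choose S.card) * (1 - 1 / ((n : ℚ) - S.card)) ≤ 1 := by
  have hfS_ne_univ (S : Finset (Fin n)) (hS : S ∈ A) : f S ≠ univ :=
    fun h ↦ hfull (h ▸ (hf S hS).1)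
  have hcount : ∑ T ∈ M, (#{σ : Perm (Fin n) | T ∈ prefixChain σ} : ℚ) +
      ∑ S ∈ A, (#{σ : Perm (Fin n) | S ∈ prefixChain σ} : ℚ) ≤
      n ! + ∑ S ∈ A, (#{σ : Perm (Fin n) | S ∈ prefixChain σ ∧ f S ∈ prefixChain σ} : ℚ) := by
    exact_mod_cast sum_card_mem_prefixChain_le hM hA hdisj hf
  simp_rw [one_div_choose_card_eq, div_mul_eq_mul_div, ← sum_div, ← add_div]
  rw [div_le_one (by positivity)]
  calc _ ≤ ∑ T ∈ M, (#{σ : Perm (Fin n) | T ∈ prefixChain σ} : ℚ) + ∑ S ∈ A,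
        ((#{σ : Perm (Fin n) | S ∈ prefixChain σ} : ℚ) -
          #{σ : Perm (Fin n) | S ∈ prefixChain σ ∧ f S ∈ prefixChain σ}) := by
        gcongr with S hS
        exact card_mem_prefixChain_mul_one_sub_le (hf S hS).2.1 (hfS_ne_univ S hS)
    _ ≤ n ! := by rw [sum_sub_distrib]; linarith
end

section
/- Let M and A be two disjoint antichains in the power set of {1,...,n} with {1,...,n} ∉ M, and suppose for every A ∈ A there is a unique f(A) ∈ M with A ⊂ f(A) (proper containment). Then Σ_{M∈M} 1/C(n,|M|) + Σ_{A∈A} (1/2)·1/C(n,|A|) ≤ 1. -/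
/-!
Lubell's chain counting. Identify maximal chains of subsets of `Fin n` with permutations `σ`, the
chain of `σ` consisting of the images of the initial segments `{0, …, k - 1}`; a set `S` lies on
`#S! (n - #S)!` of the `n!` chains. A chain meets each antichain at most once, and if it meets
both `S ∈ A` and a member of `M`, that member is comparable with `S`, hence is `f S`. So
`#(chain ∩ M) + #(chain ∩ A) ≤ 1 + #{S ∈ A | S, f S ∈ chain}`. Since `S ⊂ f S ⊊ univ`, at most half
of the chains through `S` also pass through `f S`, and summing over all chains gives the bound.
-/

open Finset Equiv

def Equiv.Perm.compEqEquivPi {α ι : Type*} (g h : α → ι) :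
    {σ : Perm α // ∀ x, h (σ x) = g x} ≃ ∀ i, {x // g x = i} ≃ {x // h x = i} where
  toFun σ i := σ.1.subtypeEquiv fun x => by rw [σ.2 x]
  invFun F :=
    ⟨(sigmaFiberEquiv g).symm.trans ((Equiv.sigmaCongrRight F).trans (sigmaFiberEquiv h)),
    fun x => (F (g x) ⟨x, rfl⟩).2⟩
  left_inv σ := by ext x; rfl
  right_inv F := by funext i; ext ⟨x, rfl⟩; rfl

theorem Equiv.Perm.card_compEq {α ι : Type*} [Fintype α] [DecidableEq α] [Fintype ι]
    [DecidableEq ι] (g h : α → ι)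
    (hgh : ∀ i, Fintype.card {x // g x = i} = Fintype.card {x // h x = i}) :
    #{σ : Perm α | ∀ x, h (σ x) = g x} = ∏ i, (Fintype.card {x // g x = i}).factorial := by
  rw [← Fintype.card_subtype, Fintype.card_congr (Perm.compEqEquivPi g h), Fintype.card_pi]
  exact prod_congr rfl fun i _ => by
    rw [Fintype.card_equiv (Fintype.equivOfCardEq (hgh i)), Fintype.card_subtype]

namespace Equiv.Perm

variable {n : ℕ}

def IsInitSeg (σ : Perm (Fin n)) (S : Finset (Fin n)) : Prop :=
  ∀ i, σ i ∈ S ↔ (i : ℕ) < #S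

instance (σ : Perm (Fin n)) (S : Finset (Fin n)) : Decidable (σ.IsInitSeg S) :=
  inferInstanceAs (Decidable (∀ i, σ i ∈ S ↔ (i : ℕ) < #S))

variable {σ : Perm (Fin n)} {S T : Finset (Fin n)}

theorem IsInitSeg.subset_of_card_le (hS : σ.IsInitSeg S) (hT : σ.IsInitSeg T)
    (h : #S ≤ #T) : S ⊆ T := by
  intro x hx
  rw [← σ.apply_symm_apply x, hT]
  exact ((hS _).1 (by simpa using hx)).trans_le h

theorem IsInitSeg.total (hS : σ.IsInitSeg S) (hT : σ.IsInitSeg T) : S ⊆ T ∨ T ⊆ S :=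
  (le_total #S #T).imp (hS.subset_of_card_le hT) (hT.subset_of_card_le hS)

theorem _root_.IsAntichain.card_filter_isInitSeg_le_one {F : Finset (Finset (Fin n))}
    (hF : IsAntichain (· ⊆ ·) (F : Set (Finset (Fin n)))) (σ : Perm (Fin n)) :
    #{S ∈ F | σ.IsInitSeg S} ≤ 1 := by
  simp only [card_le_one, mem_filter]
  intro S ⟨hSF, hS⟩ T ⟨hTF, hT⟩
  by_contra hne
  exact (hS.total hT).elim (hF hSF hTF hne) (hF hTF hSF (Ne.symm hne))

theorem card_isInitSeg (S : Finset (Fin n)) :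
    #{σ : Perm (Fin n) | σ.IsInitSeg S} = (#S).factorial * (n - #S).factorial := by
  have hSn : #S ≤ n := by simpa using card_le_univ S
  have hcard : ∀ b, Fintype.card {i : Fin n // decide ((i : ℕ) < #S) = b}
      = if b then #S else n - #S := by
    intro b
    rw [Fintype.card_subtype]
    cases b
    · have h := card_filter_add_card_filter_not (s := univ) fun i : Fin n => (i : ℕ) < #S
      simp only [Fin.card_filter_val_lt, card_univ, Fintype.card_fin, min_eq_right hSn] at h
      simp only [Bool.false_eq_true, if_false, decide_eq_false_iff_not]
      omega
    · simp [Fin.card_filter_val_lt, hSn]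
  have hfiber : ∀ b, Fintype.card {i : Fin n // decide ((i : ℕ) < #S) = b}
      = Fintype.card {x : Fin n // decide (x ∈ S) = b} := by
    intro b
    rw [hcard, Fintype.card_subtype]
    cases b <;> simp [filter_not, card_sdiff_of_subset]
  have := card_compEq _ _ hfiber
  simp only [Fintype.prod_bool, hcard, if_true, Bool.false_eq_true, if_false] at this
  convert this using 3
  simp [IsInitSeg]

theorem IsInitSeg.mul_swap (hS : σ.IsInitSeg S) {i j : Fin n} (hi : #S ≤ i) (hj : #S ≤ j) :
    (σ * swap i j).IsInitSeg S := by
  intro k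
  rw [Perm.mul_apply, swap_apply_def]
  split_ifs with hki hkj
  · subst hki
    rw [hS]
    exact iff_of_false (by omega) (by omega)
  · subst hkj
    rw [hS]
    exact iff_of_false (by omega) (by omega)
  · exact hS k

theorem IsInitSeg.not_isInitSeg_mul_swap (hT : σ.IsInitSeg T) {i j : Fin n} (hi : (i : ℕ) < #T)
    (hj : #T ≤ j) : ¬(σ * swap i j).IsInitSeg T := by
  intro h
  have hσj : σ j ∈ T := by simpa using (h i).2 hi
  exact absurd ((hT j).1 hσj) (by omega)

/-- Moving the last point of `T` past the boundary of `T` matches the permutations through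
`S ⊂ T` injectively with permutations through `S` but not through `T`. -/
theorem two_mul_card_isInitSeg_and_le (hST : S ⊂ T) (hT : T ≠ univ) :
    2 * #{σ : Perm (Fin n) | σ.IsInitSeg S ∧ σ.IsInitSeg T}
      ≤ #{σ : Perm (Fin n) | σ.IsInitSeg S} := by
  have hlt : #S < #T := card_lt_card hST
  have hTn : #T < n := by simpa using (card_lt_iff_ne_univ T).2 hT
  set i : Fin n := ⟨#T - 1, by omega⟩
  set j : Fin n := ⟨#T, hTn⟩
  set P : Finset (Perm (Fin n)) := {σ : Perm (Fin n) | σ.IsInitSeg S ∧ σ.IsInitSeg T}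
  set Q : Finset (Perm (Fin n)) := {σ : Perm (Fin n) | σ.IsInitSeg S}
  have hPQ : P ⊆ Q := monotone_filter_right _ fun _ _ => And.left
  have hinj : #P ≤ #(Q \ P) := by
    refine card_le_card_of_injOn (· * swap i j) (fun σ hσ => ?_) (mul_left_injective _).injOn
    simp only [P, Q, coe_filter, mem_univ, true_and, Set.mem_ofPred_eq, coe_sdiff,
      Set.mem_sdiff] at hσ ⊢
    have hi : (i : ℕ) < #T := show #T - 1 < #T by omega
    exact ⟨hσ.1.mul_swap (show #S ≤ #T - 1 by omega) hlt.le,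
      fun h => hσ.2.not_isInitSeg_mul_swap hi le_rfl h.2⟩
  rw [card_sdiff_of_subset hPQ] at hinj
  have := card_le_card hPQ
  omega

end Equiv.Perm

theorem Finset.sum_card_filter_comm {α β : Type*} (s : Finset α) (t : Finset β)
    (r : α → β → Prop) [∀ a b, Decidable (r a b)] :
    ∑ a ∈ s, #{b ∈ t | r a b} = ∑ b ∈ t, #{a ∈ s | r a b} :=
  sum_card_bipartiteAbove_eq_sum_card_bipartiteBelow r

theorem card_isInitSeg_div_factorial {n : ℕ} (S : Finset (Fin n)) :
    (#{σ : Perm (Fin n) | σ.IsInitSeg S} : ℚ) / n.factorial = 1 / n.choose #S := by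
  have hSn : #S ≤ n := by simpa using card_le_univ S
  rw [Perm.card_isInitSeg, Nat.cast_choose ℚ hSn, one_div_div]
  push_cast
  rfl

section ChainCounting

variable {n : ℕ} {M A : Finset (Finset (Fin n))} {f : Finset (Fin n) → Finset (Fin n)}

theorem eq_apply_of_subset_or_subset (hM : IsAntichain (· ⊆ ·) (M : Set (Finset (Fin n))))
    (hdisj : Disjoint M A) (hf : ∀ S ∈ A, f S ∈ M ∧ S ⊂ f S ∧ ∀ T ∈ M, S ⊂ T → T = f S)
    {S T : Finset (Fin n)} (hS : S ∈ A) (hT : T ∈ M) (hST : S ⊆ T ∨ T ⊆ S) : T = f S := by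
  obtain ⟨hfS, hSf, huniq⟩ := hf S hS
  rcases hST with hST | hTS
  · exact huniq T hT (hST.ssubset_of_ne fun h => disjoint_left.1 hdisj hT (h ▸ hS))
  · by_contra hne
    exact hM hT hfS hne (hTS.trans hSf.subset)

theorem card_filter_isInitSeg_add_le (hM : IsAntichain (· ⊆ ·) (M : Set (Finset (Fin n))))
    (hA : IsAntichain (· ⊆ ·) (A : Set (Finset (Fin n)))) (hdisj : Disjoint M A)
    (hf : ∀ S ∈ A, f S ∈ M ∧ S ⊂ f S ∧ ∀ T ∈ M, S ⊂ T → T = f S) (σ : Perm (Fin n)) :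
    #{T ∈ M | σ.IsInitSeg T} + #{S ∈ A | σ.IsInitSeg S}
      ≤ 1 + #{S ∈ A | σ.IsInitSeg S ∧ σ.IsInitSeg (f S)} := by
  have hM1 := hM.card_filter_isInitSeg_le_one σ
  have hA1 := hA.card_filter_isInitSeg_le_one σ
  rcases (#{T ∈ M | σ.IsInitSeg T}).eq_zero_or_pos with hM0 | hMpos
  · omega
  rcases (#{S ∈ A | σ.IsInitSeg S}).eq_zero_or_pos with hA0 | hApos
  · omega
  obtain ⟨T, hT⟩ := card_pos.1 hMpos
  obtain ⟨S, hS⟩ := card_pos.1 hApos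
  rw [mem_filter] at hT hS
  have hTf : T = f S := eq_apply_of_subset_or_subset hM hdisj hf hS.1 hT.1 (hS.2.total hT.2)
  have : 0 < #{S ∈ A | σ.IsInitSeg S ∧ σ.IsInitSeg (f S)} :=
    card_pos.2 ⟨S, mem_filter.2 ⟨hS.1, hS.2, hTf ▸ hT.2⟩⟩
  omega

theorem two_mul_sum_card_isInitSeg_add_le (hM : IsAntichain (· ⊆ ·) (M : Set (Finset (Fin n))))
    (hA : IsAntichain (· ⊆ ·) (A : Set (Finset (Fin n)))) (hdisj : Disjoint M A)
    (hfull : (univ : Finset (Fin n)) ∉ M)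
    (hf : ∀ S ∈ A, f S ∈ M ∧ S ⊂ f S ∧ ∀ T ∈ M, S ⊂ T → T = f S) :
    2 * ∑ T ∈ M, #{σ : Perm (Fin n) | σ.IsInitSeg T}
        + ∑ S ∈ A, #{σ : Perm (Fin n) | σ.IsInitSeg S} ≤ 2 * n.factorial := by
  have hsum := sum_le_sum fun σ (_ : σ ∈ univ) => card_filter_isInitSeg_add_le hM hA hdisj hf σ
  simp only [sum_add_distrib, sum_const, card_univ, Fintype.card_perm, Fintype.card_fin,
    smul_eq_mul, mul_one, sum_card_filter_comm univ] at hsum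
  have hpair : 2 * ∑ S ∈ A, #{σ : Perm (Fin n) | σ.IsInitSeg S ∧ σ.IsInitSeg (f S)}
      ≤ ∑ S ∈ A, #{σ : Perm (Fin n) | σ.IsInitSeg S} := by
    rw [mul_sum]
    refine sum_le_sum fun S hS => Perm.two_mul_card_isInitSeg_and_le (hf S hS).2.1 ?_
    exact fun h => hfull (h ▸ (hf S hS).1)
  omega

end ChainCounting

theorem stmt_6 (n : ℕ) (M A : Finset (Finset (Fin n)))
    (hM : IsAntichain (· ⊆ ·) (M : Set (Finset (Fin n))))
    (hA : IsAntichain (· ⊆ ·) (A : Set (Finset (Fin n))))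
    (hdisj : Disjoint M A)
    (hfull : (Finset.univ : Finset (Fin n)) ∉ M)
    (f : Finset (Fin n) → Finset (Fin n))
    (hf : ∀ S ∈ A, f S ∈ M ∧ S ⊂ f S ∧ ∀ T ∈ M, S ⊂ T → T = f S) :
    ∑ S ∈ M, (1 : ℚ) / (n.choose S.card)
      + ∑ S ∈ A, (1 : ℚ) / 2 * (1 / (n.choose S.card)) ≤ 1 := by
  have key := two_mul_sum_card_isInitSeg_add_le hM hA hdisj hfull hf
  calc ∑ S ∈ M, (1 : ℚ) / (n.choose S.card) + ∑ S ∈ A, (1 : ℚ) / 2 * (1 / (n.choose S.card))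
      = ((2 * ∑ T ∈ M, #{σ : Perm (Fin n) | σ.IsInitSeg T}
          + ∑ S ∈ A, #{σ : Perm (Fin n) | σ.IsInitSeg S} : ℕ) : ℚ) / (2 * n.factorial) := by
        simp only [← card_isInitSeg_div_factorial, ← mul_sum, ← sum_div]
        push_cast
        field_simp
    _ ≤ 1 := div_le_one_of_le₀ (by exact_mod_cast key) (by positivity)
end

section
/- Let n ≥ 4 and let F be a family of subsets of {1,...,n} containing no three distinct members A, B, C with A ⊂ B and A ⊂ C. Then |F| ≤ C(n, ⌊n/2⌋)·(1 + 2/(n−3)). -/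
/-!
Katona's circle method with weights. Give each set `S` the weight `C(n, #S)`: exactly
`#S! (n - #S)!` permutations of `Fin n` have `S` as an initial segment, so summing over all
permutations `σ` the weights of the members of `F` that are initial segments of `σ` gives
`#F * n!`. The initial segments of one permutation form a chain, and in a V-free family such a
chain has at most two members `U ⊂ V`, of total weight at most `C + min (C(n, #U)) (C(n, #V))`,
where `C = C(n, n/2)`. The excess `min (…)` is paid only by the permutations through both `U` and
`V`, a fraction `1 / C(n - #U, #V - #U)` of those through `U`; this fraction is small enough that
the excess paid for the pair is at most `2C / (n - 3)` times the number of permutations through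
`U`. The lower sets `U` of such pairs form an antichain, so by Lubell's permutation form of the LYM
inequality the total excess is at most `2C n! / (n - 3)`.
-/

open Finset Nat

theorem Equiv.Perm.card_comp_eq_of_card_fiber {α ι : Type*} [Fintype α] [DecidableEq α]
    [Fintype ι] [DecidableEq ι] {f g : α → ι}
    (h : ∀ i, Fintype.card {a // f a = i} = Fintype.card {a // g a = i}) :
    Fintype.card {σ : Equiv.Perm α // g ∘ σ = f} = ∏ i, (Fintype.card {a // f a = i})! := by
  -- `τ` carries each fiber of `f` onto the fiber of `g`, so `σ ↦ τ⁻¹ * σ` lands in the stabilizer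
  set τ : Equiv.Perm α := Equiv.ofFiberEquiv fun i => Fintype.equivOfCardEq (h i)
  have hτ : g ∘ τ = f := funext (Equiv.ofFiberEquiv_map _)
  rw [← DomMulAct.stabilizer_card]
  refine Fintype.card_congr (Equiv.subtypeEquiv (Equiv.mulLeft τ⁻¹) fun σ => ?_)
  rw [← hτ]
  simp [funext_iff]

section MembershipPair

variable {α : Type*} [DecidableEq α]

def membershipPair (U V : Finset α) (x : α) : Bool × Bool := (decide (x ∈ U), decide (x ∈ V))

variable [Fintype α] {U V : Finset α}

lemma card_membershipPair_fiber (hUV : U ⊆ V) (b c : Bool) :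
    Fintype.card {x // membershipPair U V x = (b, c)} =
      if b then (if c then #U else 0) else (if c then #V - #U else Fintype.card α - #V) := by
  rw [Fintype.card_subtype]
  cases b <;> cases c <;> simp only [membershipPair, Prod.mk.injEq, decide_eq_true_iff,
    decide_eq_false_iff_not, if_true, if_false, Bool.false_eq_true]
  · rw [← card_compl]; congr 1; ext x; have := @hUV x; simp; tauto
  · rw [← card_sdiff_of_subset hUV]; congr 1; ext x; simp [and_comm]
  · simpa using fun x hx => hUV hx
  · congr 1; ext x; simpa using fun hx => hUV hx

lemma prod_factorial_card_membershipPair_fiber (hUV : U ⊆ V) :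
    ∏ b, (Fintype.card {x // membershipPair U V x = b})! =
      (#U)! * (#V - #U)! * (Fintype.card α - #V)! := by
  simp only [Fintype.prod_prod_type, Fintype.prod_bool, card_membershipPair_fiber hUV]
  simp only [if_true, Bool.false_eq_true, if_false, factorial_zero]
  ring

end MembershipPair

section InitialSegment

variable {n : ℕ}

def IsInitialSegment (σ : Equiv.Perm (Fin n)) (S : Finset (Fin n)) : Prop :=
  ∀ i, σ i ∈ S ↔ (i : ℕ) < #S

instance (σ : Equiv.Perm (Fin n)) (S : Finset (Fin n)) : Decidable (IsInitialSegment σ S) :=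
  by unfold IsInitialSegment; infer_instance

lemma IsInitialSegment.subset_of_card_le {σ : Equiv.Perm (Fin n)} {S T : Finset (Fin n)}
    (hS : IsInitialSegment σ S) (hT : IsInitialSegment σ T) (h : #S ≤ #T) : S ⊆ T := by
  intro x hx
  rw [← σ.apply_symm_apply x] at hx ⊢
  exact (hT _).2 (((hS _).1 hx).trans_le h)

lemma isChain_isInitialSegment (σ : Equiv.Perm (Fin n)) :
    IsChain (· ⊆ ·) {S | IsInitialSegment σ S} := by
  intro S hS T hT _
  rcases le_total #S #T with h | h
  · exact .inl (hS.subset_of_card_le hT h)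
  · exact .inr (hT.subset_of_card_le hS h)

theorem card_isInitialSegment_and {U V : Finset (Fin n)} (hUV : U ⊆ V) :
    #{σ : Equiv.Perm (Fin n) | IsInitialSegment σ U ∧ IsInitialSegment σ V} =
      (#U)! * (#V - #U)! * (n - #V)! := by
  set I : ℕ → Finset (Fin n) := fun k => {i | (i : ℕ) < k}
  have hI : ∀ {S : Finset (Fin n)}, #(I #S) = #S := fun {S} => by
    simpa [I, Fin.card_filter_val_lt] using card_le_univ S
  have hIUV : I #U ⊆ I #V := fun _ => by simpa [I] using fun h => h.trans_le (card_le_card hUV)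
  have hiff : ∀ σ : Equiv.Perm (Fin n), IsInitialSegment σ U ∧ IsInitialSegment σ V ↔
      membershipPair U V ∘ σ = membershipPair (I #U) (I #V) := fun σ => by
    simp [IsInitialSegment, membershipPair, funext_iff, I, forall_and]
  rw [← Fintype.card_subtype, Fintype.card_congr (Equiv.subtypeEquivRight hiff),
    Equiv.Perm.card_comp_eq_of_card_fiber, prod_factorial_card_membershipPair_fiber hIUV,
    hI, hI, Fintype.card_fin]
  rintro ⟨b, c⟩
  rw [card_membershipPair_fiber hIUV, card_membershipPair_fiber hUV, hI, hI, Fintype.card_fin]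

theorem card_isInitialSegment (S : Finset (Fin n)) :
    #{σ : Equiv.Perm (Fin n) | IsInitialSegment σ S} = (#S)! * (n - #S)! := by
  simpa using card_isInitialSegment_and (subset_refl S)

end InitialSegment

lemma sum_sum_filter_eq_sum_mul_card {β γ : Type*} [Fintype β] (s : Finset γ)
    (p : β → γ → Prop) [∀ b c, Decidable (p b c)] (w : γ → ℕ) :
    ∑ b, ∑ c ∈ s with p b c, w c = ∑ c ∈ s, w c * #{b | p b c} := by
  simp_rw [sum_filter]
  rw [sum_comm]
  refine sum_congr rfl fun c _ => ?_
  rw [← sum_filter, sum_const, smul_eq_mul, mul_comm]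

theorem sum_factorial_mul_factorial_le {n : ℕ} {𝒜 : Finset (Finset (Fin n))}
    (h𝒜 : IsAntichain (· ⊆ ·) (𝒜 : Set (Finset (Fin n)))) :
    ∑ A ∈ 𝒜, (#A)! * (n - #A)! ≤ n ! := by
  have hchain (σ : Equiv.Perm (Fin n)) : #{A ∈ 𝒜 | IsInitialSegment σ A} ≤ 1 := by
    refine card_le_one.2 fun A hA B hB => ?_
    simp only [mem_filter] at hA hB
    exact inter_subsingleton_of_isAntichain_of_isChain h𝒜 (isChain_isInitialSegment σ)
      ⟨hA.1, hA.2⟩ ⟨hB.1, hB.2⟩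
  calc ∑ A ∈ 𝒜, (#A)! * (n - #A)!
      = ∑ σ : Equiv.Perm (Fin n), ∑ A ∈ 𝒜 with IsInitialSegment σ A, 1 := by
        rw [sum_sum_filter_eq_sum_mul_card]; simp [card_isInitialSegment]
    _ ≤ ∑ σ : Equiv.Perm (Fin n), 1 := sum_le_sum fun σ _ => by simpa using hchain σ
    _ = n ! := by simp [Fintype.card_perm]

lemma le_choose_of_pos_of_lt {m k : ℕ} (hk : 0 < k) (hkm : k < m) : m ≤ m.choose k := by
  induction k generalizing m with
  | zero => omega
  | succ k ih =>
    obtain ⟨m, rfl⟩ : ∃ m', m = m' + 1 := ⟨m - 1, by omega⟩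
    rcases k.eq_zero_or_pos with rfl | hk
    · simp
    rw [choose_succ_succ']
    have := choose_pos (n := m) (k := k + 1) (by omega)
    have := ih (m := m) hk (by omega)
    omega

lemma sub_three_mul_choose_le (n : ℕ) {m : ℕ} (hm : 0 < m) :
    (n - 3) * n.choose m ≤ 2 * m * n.choose (n / 2) := by
  by_cases hsmall : n - 3 ≤ 2 * m
  · calc (n - 3) * n.choose m ≤ 2 * m * n.choose m := Nat.mul_le_mul_right _ hsmall
      _ ≤ 2 * m * n.choose (n / 2) := Nat.mul_le_mul_left _ (choose_le_middle m n)
  -- now `m + 1 ≤ n / 2`: compare with the larger coefficient `n.choose (m + 1)`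
  have harith : (n - 3) * (m + 1) ≤ 2 * m * (n - m) := by
    obtain ⟨f, rfl⟩ : ∃ f, n = 2 * m + f + 4 := ⟨n - (2 * m + 4), by omega⟩
    rw [show 2 * m + f + 4 - 3 = 2 * m + f + 1 by omega,
      show 2 * m + f + 4 - m = m + f + 4 by omega]
    nlinarith
  have hstep : (n - 3) * n.choose m * (m + 1) ≤ 2 * m * n.choose (m + 1) * (m + 1) := by
    calc (n - 3) * n.choose m * (m + 1) = (n - 3) * (m + 1) * n.choose m := by ring
      _ ≤ 2 * m * (n - m) * n.choose m := Nat.mul_le_mul_right _ harith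
      _ = 2 * m * n.choose (m + 1) * (m + 1) := by
          rw [mul_assoc, mul_comm (n - m), ← choose_succ_right_eq]; ring
  calc (n - 3) * n.choose m ≤ 2 * m * n.choose (m + 1) :=
        Nat.le_of_mul_le_mul_right hstep m.succ_pos
    _ ≤ 2 * m * n.choose (n / 2) := Nat.mul_le_mul_left _ (choose_le_middle _ n)

lemma sub_three_mul_min_choose_le {n u v : ℕ} (huv : u < v) (hvn : v ≤ n) :
    (n - 3) * min (n.choose u) (n.choose v) ≤ 2 * n.choose (n / 2) * (n - u).choose (v - u) := by
  rcases hvn.eq_or_lt with rfl | hvn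
  · have hn : v ≤ v.choose (v / 2) := by simpa using choose_le_middle 1 v
    simp only [choose_self, mul_one]
    calc (v - 3) * min (v.choose u) 1 ≤ v - 3 := by
          simpa using Nat.mul_le_mul_left (v - 3) (min_le_right _ 1)
      _ ≤ 2 * v.choose (v / 2) := by omega
  calc (n - 3) * min (n.choose u) (n.choose v) ≤ (n - 3) * n.choose (n - u) := by
        rw [choose_symm (huv.le.trans hvn.le)]; exact Nat.mul_le_mul_left _ (min_le_left _ _)
    _ ≤ 2 * (n - u) * n.choose (n / 2) := sub_three_mul_choose_le n (by omega)
    _ ≤ 2 * n.choose (n / 2) * (n - u).choose (v - u) := by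
        rw [mul_right_comm]
        exact Nat.mul_le_mul_left _ (le_choose_of_pos_of_lt (by omega) (by omega))

section VFree

variable {α : Type*}

def IsVFree (F : Finset (Finset α)) : Prop :=
  ∀ ⦃A⦄, A ∈ F → ∀ ⦃B⦄, B ∈ F → ∀ ⦃C⦄, C ∈ F → A ⊂ B → A ⊂ C → B = C

variable [DecidableEq α]

def ssubsetPairs (F : Finset (Finset α)) : Finset (Finset α × Finset α) :=
  {p ∈ F ×ˢ F | p.1 ⊂ p.2}

variable {F : Finset (Finset α)}

lemma mem_ssubsetPairs {p : Finset α × Finset α} :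
    p ∈ ssubsetPairs F ↔ p.1 ∈ F ∧ p.2 ∈ F ∧ p.1 ⊂ p.2 := by
  simp [ssubsetPairs, and_assoc]

namespace IsVFree

lemma eq_pair_of_ssubset (hF : IsVFree F) {G : Finset (Finset α)} (hGF : G ⊆ F)
    (hG : IsChain (· ⊆ ·) (G : Set (Finset α))) {U V : Finset α} (hU : U ∈ G) (hV : V ∈ G)
    (hUV : U ⊂ V) : G = {U, V} := by
  ext W
  simp only [mem_insert, mem_singleton]
  refine ⟨fun hW => ?_, by rintro (rfl | rfl) <;> assumption⟩
  by_contra! hne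
  rcases hG hW hU hne.1 with hWU | hUW
  · have hWU' := hWU.ssubset_of_ne hne.1
    exact hUV.ne (hF (hGF hW) (hGF hU) (hGF hV) hWU' (hWU'.trans hUV))
  · exact hne.2 (hF (hGF hU) (hGF hW) (hGF hV) (hUW.ssubset_of_ne hne.1.symm) hUV)

lemma injOn_fst (hF : IsVFree F) :
    Set.InjOn Prod.fst (ssubsetPairs F : Set (Finset α × Finset α)) := by
  rintro ⟨A, B⟩ hp ⟨_, B'⟩ hq rfl
  simp only [mem_coe, mem_ssubsetPairs] at hp hq
  rw [hF hp.1 hp.2.1 hq.2.1 hp.2.2 hq.2.2]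

lemma isAntichain_image_fst (hF : IsVFree F) :
    IsAntichain (· ⊆ ·) ((ssubsetPairs F).image Prod.fst : Set (Finset α)) := by
  simp only [coe_image]
  rintro _ ⟨⟨A, B⟩, hp, rfl⟩ _ ⟨⟨A', B'⟩, hq, rfl⟩ hne hAA'
  simp only [mem_coe, mem_ssubsetPairs] at hp hq
  have hA : A ⊂ A' := hAA'.ssubset_of_ne hne
  exact hq.2.2.ne (hF hp.1 hq.1 hq.2.1 hA (hA.trans hq.2.2))

end IsVFree

end VFree

lemma sub_three_mul_min_choose_mul_card_le {n : ℕ} {U V : Finset (Fin n)} (hUV : U ⊂ V) :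
    (n - 3) * (min (n.choose #U) (n.choose #V) *
      #{σ : Equiv.Perm (Fin n) | IsInitialSegment σ U ∧ IsInitialSegment σ V}) ≤
      2 * n.choose (n / 2) * ((#U)! * (n - #U)!) := by
  have hUV' : #U < #V := card_lt_card hUV
  have hVn : #V ≤ n := by simpa using card_le_univ V
  have hfac : (n - #U).choose (#V - #U) * (#V - #U)! * (n - #V)! = (n - #U)! := by
    have := choose_mul_factorial_mul_factorial (n := n - #U) (k := #V - #U) (by omega)
    rwa [show n - #U - (#V - #U) = n - #V by omega] at this
  rw [card_isInitialSegment_and hUV.subset]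
  calc (n - 3) * (min (n.choose #U) (n.choose #V) * ((#U)! * (#V - #U)! * (n - #V)!))
      = (n - 3) * min (n.choose #U) (n.choose #V) * ((#U)! * (#V - #U)! * (n - #V)!) := by ring
    _ ≤ 2 * n.choose (n / 2) * (n - #U).choose (#V - #U) * ((#U)! * (#V - #U)! * (n - #V)!) :=
        Nat.mul_le_mul_right _ (sub_three_mul_min_choose_le hUV' hVn)
    _ = 2 * n.choose (n / 2) * ((#U)! * (n - #U)!) := by rw [← hfac]; ring

namespace IsVFree

variable {n : ℕ} {F : Finset (Finset (Fin n))}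

lemma sum_choose_le (hF : IsVFree F) (σ : Equiv.Perm (Fin n)) :
    ∑ S ∈ F with IsInitialSegment σ S, n.choose #S ≤ n.choose (n / 2) +
      ∑ p ∈ ssubsetPairs F with IsInitialSegment σ p.1 ∧ IsInitialSegment σ p.2,
        min (n.choose #p.1) (n.choose #p.2) := by
  set G := {S ∈ F | IsInitialSegment σ S}
  have hG : IsChain (· ⊆ ·) (G : Set (Finset (Fin n))) :=
    (isChain_isInitialSegment σ).mono fun S hS => (mem_filter.1 hS).2
  by_cases hpair : ∃ U ∈ G, ∃ V ∈ G, U ⊂ V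
  · obtain ⟨U, hU, V, hV, hUV⟩ := hpair
    have hmem :
        (U, V) ∈ {p ∈ ssubsetPairs F | IsInitialSegment σ p.1 ∧ IsInitialSegment σ p.2} := by
      simp_all [G, mem_ssubsetPairs]
    rw [hF.eq_pair_of_ssubset (G := G) (filter_subset _ _) hG hU hV hUV,
      sum_pair hUV.ne, ← max_add_min]
    gcongr
    · exact max_le (choose_le_middle _ _) (choose_le_middle _ _)
    · exact single_le_sum (f := fun p => min (n.choose #p.1) (n.choose #p.2))
        (fun _ _ => Nat.zero_le _) hmem
  · have hG1 : #G ≤ 1 := card_le_one.2 fun A hA B hB => by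
      by_contra hne
      rcases hG hA hB hne with h | h
      · exact hpair ⟨A, hA, B, hB, h.ssubset_of_ne hne⟩
      · exact hpair ⟨B, hB, A, hA, h.ssubset_of_ne (Ne.symm hne)⟩
    calc ∑ S ∈ G, n.choose #S ≤ #G • n.choose (n / 2) :=
          sum_le_card_nsmul _ _ _ fun S _ => choose_le_middle _ _
      _ ≤ n.choose (n / 2) := by simpa using Nat.mul_le_mul_right (n.choose (n / 2)) hG1
      _ ≤ _ := Nat.le_add_right _ _

theorem card_mul_factorial_le (hF : IsVFree F) :
    #F * n ! ≤ n ! * n.choose (n / 2) +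
      ∑ p ∈ ssubsetPairs F, min (n.choose #p.1) (n.choose #p.2) *
        #{σ : Equiv.Perm (Fin n) | IsInitialSegment σ p.1 ∧ IsInitialSegment σ p.2} := by
  calc #F * n !
      = ∑ S ∈ F, n.choose #S * #{σ : Equiv.Perm (Fin n) | IsInitialSegment σ S} := by
        rw [card_eq_sum_ones, sum_mul]
        refine sum_congr rfl fun S _ => ?_
        rw [card_isInitialSegment, ← mul_assoc, one_mul,
          choose_mul_factorial_mul_factorial (by simpa using card_le_univ S)]
    _ = ∑ σ : Equiv.Perm (Fin n), ∑ S ∈ F with IsInitialSegment σ S, n.choose #S :=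
        (sum_sum_filter_eq_sum_mul_card _ _ _).symm
    _ ≤ ∑ σ : Equiv.Perm (Fin n), (n.choose (n / 2) +
          ∑ p ∈ ssubsetPairs F with IsInitialSegment σ p.1 ∧ IsInitialSegment σ p.2,
            min (n.choose #p.1) (n.choose #p.2)) :=
        sum_le_sum fun σ _ => hF.sum_choose_le σ
    _ = _ := by
        rw [sum_add_distrib, sum_sum_filter_eq_sum_mul_card]
        simp [Fintype.card_perm]

theorem sub_three_mul_sum_ssubsetPairs_le (hF : IsVFree F) :
    (n - 3) * ∑ p ∈ ssubsetPairs F, min (n.choose #p.1) (n.choose #p.2) *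
      #{σ : Equiv.Perm (Fin n) | IsInitialSegment σ p.1 ∧ IsInitialSegment σ p.2} ≤
      2 * n.choose (n / 2) * n ! := by
  rw [mul_sum]
  calc _ ≤ ∑ p ∈ ssubsetPairs F, 2 * n.choose (n / 2) * ((#p.1)! * (n - #p.1)!) :=
        sum_le_sum fun p hp => sub_three_mul_min_choose_mul_card_le (mem_ssubsetPairs.1 hp).2.2
    _ = 2 * n.choose (n / 2) * ∑ A ∈ (ssubsetPairs F).image Prod.fst, (#A)! * (n - #A)! := by
        rw [sum_image hF.injOn_fst, mul_sum]
    _ ≤ 2 * n.choose (n / 2) * n ! :=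
        Nat.mul_le_mul_left _ (sum_factorial_mul_factorial_le hF.isAntichain_image_fst)

theorem sub_three_mul_card_le (hF : IsVFree F) :
    (n - 3) * #F ≤ (n - 3) * n.choose (n / 2) + 2 * n.choose (n / 2) := by
  obtain ⟨X, hF_le, hX_le⟩ : ∃ X, #F * n ! ≤ n ! * n.choose (n / 2) + X ∧
      (n - 3) * X ≤ 2 * n.choose (n / 2) * n ! :=
    ⟨_, hF.card_mul_factorial_le, hF.sub_three_mul_sum_ssubsetPairs_le⟩
  refine Nat.le_of_mul_le_mul_right ?_ (factorial_pos n)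
  calc (n - 3) * #F * n ! ≤ (n - 3) * (n ! * n.choose (n / 2) + X) := by
        rw [mul_assoc]; exact Nat.mul_le_mul_left _ hF_le
    _ ≤ (n - 3) * (n ! * n.choose (n / 2)) + 2 * n.choose (n / 2) * n ! := by
        rw [mul_add]; exact Nat.add_le_add_left hX_le _
    _ = ((n - 3) * n.choose (n / 2) + 2 * n.choose (n / 2)) * n ! := by ring

end IsVFree

theorem stmt_7 (n : ℕ) (hn : 4 ≤ n) (F : Finset (Finset (Fin n)))
    (h : ∀ A ∈ F, ∀ B ∈ F, ∀ C ∈ F,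
      A ≠ B → A ≠ C → B ≠ C → ¬ (A ⊂ B ∧ A ⊂ C)) :
    (F.card : ℚ) ≤ (n.choose (n / 2) : ℚ) * (1 + 2 / ((n : ℚ) - 3)) := by
  have hF : IsVFree F := fun A hA B hB C hC hAB hAC =>
    by_contra fun hBC => h A hA B hB C hC hAB.ne hAC.ne hBC ⟨hAB, hAC⟩
  have hpos : (0 : ℚ) < n - 3 := by
    have : (4 : ℚ) ≤ n := by exact_mod_cast hn
    linarith
  have key : ((n - 3 : ℕ) : ℚ) * #F ≤ (n - 3 : ℕ) * n.choose (n / 2) + 2 * n.choose (n / 2) :=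
    mod_cast hF.sub_three_mul_card_le
  rw [Nat.cast_sub (by omega), Nat.cast_ofNat] at key
  calc (#F : ℚ) = (n - 3) * #F / (n - 3) := by field_simp
    _ ≤ ((n - 3) * n.choose (n / 2) + 2 * n.choose (n / 2)) / (n - 3) := by gcongr
    _ = n.choose (n / 2) * (1 + 2 / (n - 3)) := by field_simp
end

section
/- If Â ⊂ B̂ are two distinct intervals modulo n with ∅ ≠ Â and B̂ ≠ Z/nZ, then the number of maximal chains of intervals L_1 ⊂ ... ⊂ L_n (|L_i| = i) containing both Â and B̂ is at most 2^(n−3). -/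
/-- `L` is a maximal chain of intervals mod `n`. -/
def IsIntervalChain (n : ℕ) (L : Fin n → Finset (ZMod n)) : Prop :=
  (∀ i, (L i).card = (i : ℕ) + 1 ∧ IsCyclicInterval n (L i)) ∧ ∀ i j : Fin n, i < j → L i ⊂ L j

/-!
An interval of size `m` with `0 < m < n` has a unique start, and an interval of size `m + 1 < n`
contains exactly two intervals of size `m`: the one with the same start and the one starting one
step later. So at each step of a chain below the last one it suffices to record whether the chain
grows at its right end; given this bit, either of the two intervals of the step determines the
other. For a chain through `A ⊂ B ≠ ZMod n`, the bits below `B` recover the chain downwards from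
`B` and from `A`, those from `B` on recover it upwards, and the last step is forced. The bit of the
step leaving `A` is never used, so `n - 3` bits determine the chain.
-/

variable {n : ℕ}

def cyclicItv (n : ℕ) (k : ZMod n) (m : ℕ) : Finset (ZMod n) :=
  (Finset.range m).image (fun i : ℕ => k + (i : ZMod n))

theorem mem_cyclicItv [NeZero n] {k x : ZMod n} {m : ℕ} (hm : m ≤ n) :
    x ∈ cyclicItv n k m ↔ (x - k).val < m := by
  simp only [cyclicItv, Finset.mem_image, Finset.mem_range]
  constructor
  · rintro ⟨i, hi, rfl⟩
    rwa [add_sub_cancel_left, ZMod.val_cast_of_lt (hi.trans_le hm)]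
  · exact fun h => ⟨(x - k).val, h, by rw [ZMod.natCast_zmod_val, add_sub_cancel]⟩

theorem card_cyclicItv (k : ZMod n) {m : ℕ} (hm : m ≤ n) : (cyclicItv n k m).card = m := by
  rw [cyclicItv, Finset.card_image_of_injOn, Finset.card_range]
  intro i hi j hj hij
  have hij' := congrArg ZMod.val (add_left_cancel hij)
  simp only [Finset.coe_range, Set.mem_Iio] at hi hj
  rwa [ZMod.val_cast_of_lt (hi.trans_le hm), ZMod.val_cast_of_lt (hj.trans_le hm)] at hij'

theorem IsCyclicInterval.exists_eq_cyclicItv_card [NeZero n] {S : Finset (ZMod n)}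
    (hS : IsCyclicInterval n S) (h : S.card < n) : ∃ k, S = cyclicItv n k S.card := by
  obtain ⟨k, m, rfl⟩ := hS
  change (cyclicItv n k m).card < n at h
  refine ⟨k, ?_⟩
  change cyclicItv n k m = cyclicItv n k (cyclicItv n k m).card
  rcases le_or_gt m n with hm | hm
  · rw [card_cyclicItv k hm]
  · have := Finset.card_le_card (show cyclicItv n k n ⊆ cyclicItv n k m from
      Finset.image_subset_image (Finset.range_subset_range.mpr hm.le))
    rw [card_cyclicItv k le_rfl] at this
    omega

theorem val_sub_add_le_of_cyclicItv_subset [NeZero n] {k k' : ZMod n} {m m' : ℕ} (hm : 0 < m)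
    (hm' : m' < n) (h : cyclicItv n k m ⊆ cyclicItv n k' m') : (k - k').val + m ≤ m' := by
  set d := (k - k').val with hd
  have hdn : d < n := ZMod.val_lt _
  have offset : ∀ j < m, d + j < n → d + j < m' := by
    intro j hj hdj
    have hmem := h (Finset.mem_image_of_mem _ (Finset.mem_range.mpr hj))
    have hshift : k + (j : ZMod n) - k' = ((d + j : ℕ) : ZMod n) := by
      rw [Nat.cast_add, hd, ZMod.natCast_zmod_val]; ring
    rwa [mem_cyclicItv hm'.le, hshift, ZMod.val_cast_of_lt hdj] at hmem
  by_cases hwrap : d + (m - 1) < n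
  · have := offset (m - 1) (by omega) hwrap; omega
  · have := offset (n - 1 - d) (by omega) (by omega); omega

theorem eq_of_cyclicItv_eq [NeZero n] {k k' : ZMod n} {m : ℕ} (hm : 0 < m) (hmn : m < n)
    (h : cyclicItv n k m = cyclicItv n k' m) : k = k' := by
  have := val_sub_add_le_of_cyclicItv_subset hm hmn h.subset
  exact sub_eq_zero.mp ((ZMod.val_eq_zero _).mp (by omega))

theorem eq_or_eq_add_one_of_cyclicItv_subset [NeZero n] {k k' : ZMod n} {m : ℕ} (hm : 0 < m)
    (hmn : m + 1 < n) (h : cyclicItv n k m ⊆ cyclicItv n k' (m + 1)) : k = k' ∨ k = k' + 1 := by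
  have := val_sub_add_le_of_cyclicItv_subset hm hmn h
  rcases (show (k - k').val = 0 ∨ (k - k').val = 1 by omega) with h0 | h1
  · exact .inl (sub_eq_zero.mp ((ZMod.val_eq_zero _).mp h0))
  · exact .inr (sub_eq_iff_eq_add'.mp ((ZMod.val_eq_one (by omega) _).mp h1))

def GrowsRightAt (L : Fin n → Finset (ZMod n)) (i : ℕ) : Prop :=
  ∃ (h : i + 1 < n) (k : ZMod n),
    L ⟨i, by omega⟩ = cyclicItv n k (i + 1) ∧ L ⟨i + 1, h⟩ = cyclicItv n k (i + 2)

namespace IsIntervalChain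

variable {L M : Fin n → Finset (ZMod n)}

theorem card_eq (hL : IsIntervalChain n L) (i : Fin n) : (L i).card = i + 1 := (hL.1 i).1

theorem index_eq (hL : IsIntervalChain n L) (hM : IsIntervalChain n M) {i j : Fin n}
    (h : L i = M j) : i = j :=
  Fin.ext (by have := hL.card_eq i; have := hM.card_eq j; rw [h] at *; omega)

variable [NeZero n]

theorem eq_univ (hL : IsIntervalChain n L) (i : Fin n) (hi : (i : ℕ) + 1 = n) :
    L i = Finset.univ :=
  Finset.eq_univ_of_card _ (by rw [hL.card_eq, ZMod.card, hi])

theorem exists_eq_cyclicItv (hL : IsIntervalChain n L) (i : Fin n) (hi : (i : ℕ) + 1 < n) :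
    ∃ k, L i = cyclicItv n k (i + 1) := by
  rw [← hL.card_eq i]
  exact (hL.1 i).2.exists_eq_cyclicItv_card (by rw [hL.card_eq]; exact hi)

theorem exists_step (hL : IsIntervalChain n L) {i : ℕ} (hi : i + 2 < n) :
    ∃ kS kT : ZMod n, L ⟨i, by omega⟩ = cyclicItv n kS (i + 1) ∧
      L ⟨i + 1, by omega⟩ = cyclicItv n kT (i + 2) ∧ (kS = kT ∨ kS = kT + 1) ∧
      (GrowsRightAt L i ↔ kS = kT) := by
  obtain ⟨kS, hS⟩ := hL.exists_eq_cyclicItv ⟨i, by omega⟩ (by simp only; omega)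
  obtain ⟨kT, hT⟩ := hL.exists_eq_cyclicItv ⟨i + 1, by omega⟩ (by simp only; omega)
  have hsub := (hL.2 ⟨i, by omega⟩ ⟨i + 1, by omega⟩ (Fin.mk_lt_mk.mpr i.lt_succ_self)).subset
  rw [hS, hT] at hsub
  refine ⟨kS, kT, hS, hT, eq_or_eq_add_one_of_cyclicItv_subset i.succ_pos (by omega) hsub, ?_⟩
  constructor
  · rintro ⟨_, k, hS', hT'⟩
    rw [eq_of_cyclicItv_eq i.succ_pos (by omega) (hS.symm.trans hS'),
      eq_of_cyclicItv_eq (by omega) (by omega) (hT.symm.trans hT')]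
  · rintro rfl
    exact ⟨by omega, kS, hS, hT⟩

theorem eq_of_succ_eq (hL : IsIntervalChain n L) (hM : IsIntervalChain n M) {i : ℕ}
    (hi : i + 2 < n) (hb : GrowsRightAt L i ↔ GrowsRightAt M i)
    (h : L ⟨i + 1, by omega⟩ = M ⟨i + 1, by omega⟩) : L ⟨i, by omega⟩ = M ⟨i, by omega⟩ := by
  obtain ⟨kS, kT, hS, hT, hST, hbL⟩ := hL.exists_step hi
  obtain ⟨kS', kT', hS', hT', hST', hbM⟩ := hM.exists_step hi
  obtain rfl : kT = kT' := eq_of_cyclicItv_eq (by omega) (by omega) (hT.symm.trans (h.trans hT'))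
  have hb' : kS = kT ↔ kS' = kT := hbL.symm.trans (hb.trans hbM)
  rw [hS, hS']
  congr 1
  rcases hST with rfl | rfl <;> rcases hST' with rfl | rfl <;> simp_all

theorem succ_eq_of_eq (hL : IsIntervalChain n L) (hM : IsIntervalChain n M) {i : ℕ}
    (hi : i + 2 < n) (hb : GrowsRightAt L i ↔ GrowsRightAt M i)
    (h : L ⟨i, by omega⟩ = M ⟨i, by omega⟩) : L ⟨i + 1, by omega⟩ = M ⟨i + 1, by omega⟩ := by
  obtain ⟨kS, kT, hS, hT, hST, hbL⟩ := hL.exists_step hi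
  obtain ⟨kS', kT', hS', hT', hST', hbM⟩ := hM.exists_step hi
  obtain rfl : kS = kS' := eq_of_cyclicItv_eq (by omega) (by omega) (hS.symm.trans (h.trans hS'))
  have hb' : kS = kT ↔ kS = kT' := hbL.symm.trans (hb.trans hbM)
  rw [hT, hT']
  congr 1
  rcases hST with rfl | h <;> rcases hST' with rfl | h' <;> simp_all

theorem eq_of_eq_of_le (hL : IsIntervalChain n L) (hM : IsIntervalChain n M) {i : ℕ} {j : Fin n}
    (hj : (j : ℕ) + 1 < n) (hb : ∀ k, i ≤ k → k < j → (GrowsRightAt L k ↔ GrowsRightAt M k))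
    (h : L j = M j) (k : Fin n) (hik : i ≤ k) (hkj : k ≤ j) : L k = M k := by
  obtain ⟨j, hjn⟩ := j
  obtain ⟨k, hkn⟩ := k
  simp only [Fin.mk_le_mk] at hj hb hik hkj
  induction hkj using Nat.decreasingInduction with
  | self => exact h
  | of_succ k hkj ih =>
    exact hL.eq_of_succ_eq hM (by omega) (hb k hik hkj) (ih (by omega) (by omega))

theorem eq_of_eq_of_ge (hL : IsIntervalChain n L) (hM : IsIntervalChain n M) {i : Fin n}
    (hb : ∀ k, (i : ℕ) ≤ k → k + 2 < n → (GrowsRightAt L k ↔ GrowsRightAt M k))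
    (h : L i = M i) (k : Fin n) (hik : i ≤ k) (hk : (k : ℕ) + 1 < n) : L k = M k := by
  obtain ⟨i, hin⟩ := i
  obtain ⟨k, hkn⟩ := k
  rw [Fin.mk_le_mk] at hik
  induction k, hik using Nat.le_induction with
  | base => exact h
  | succ k hik ih =>
    exact hL.succ_eq_of_eq hM (by omega) (hb k hik (by omega)) (ih (by omega) (by omega))

theorem eq_of_growsRightAt_iff (hL : IsIntervalChain n L) (hM : IsIntervalChain n M)
    {i j : Fin n} (hij : i < j) (hj : (j : ℕ) + 1 < n) (hi_eq : L i = M i) (hj_eq : L j = M j)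
    (hb : ∀ k, k + 2 < n → k ≠ i → (GrowsRightAt L k ↔ GrowsRightAt M k)) : L = M := by
  rw [Fin.lt_def] at hij
  funext k
  rcases le_or_gt k i with hki | hik
  · exact hL.eq_of_eq_of_le hM (i := 0) (by omega) (fun l _ hl => hb l (by omega) (by omega))
      hi_eq k (Nat.zero_le _) hki
  rcases le_or_gt k j with hkj | hjk
  · exact hL.eq_of_eq_of_le hM (i := i + 1) hj (fun l hl _ => hb l (by omega) (by omega))
      hj_eq k hik hkj
  by_cases hk : (k : ℕ) + 1 < n
  · exact hL.eq_of_eq_of_ge hM (fun l _ hl => hb l hl (by omega)) hj_eq k hjk.le hk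
  · rw [hL.eq_univ k (by omega), hM.eq_univ k (by omega)]

end IsIntervalChain

theorem stmt_13_general (n : ℕ) [NeZero n] (A B : Finset (ZMod n)) (hAB : A ⊂ B)
    (hBne : B ≠ Finset.univ) :
    Nat.card {L : Fin n → Finset (ZMod n) //
        IsIntervalChain n L ∧ (∃ i, L i = A) ∧ ∃ j, L j = B}
      ≤ 2 ^ (n - 3) := by
  classical
  have hAB_card : A.card < B.card := Finset.card_lt_card hAB
  have hB_card : B.card < n := by
    simpa using Finset.card_lt_card (Finset.ssubset_univ_iff.mpr hBne)
  let p : Fin (n - 3 + 1) := ⟨A.card - 1, by omega⟩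
  let bits (L : {L // IsIntervalChain n L ∧ (∃ i, L i = A) ∧ ∃ j, L j = B}) (y : Fin (n - 3)) :
      Bool := decide (GrowsRightAt L.1 (p.succAbove y))
  have bits_injective : Function.Injective bits := by
    rintro ⟨L, hL, ⟨i, hi⟩, ⟨j, hj⟩⟩ ⟨M, hM, ⟨i', hi'⟩, ⟨j', hj'⟩⟩ h
    obtain rfl : i = i' := hL.index_eq hM (hi.trans hi'.symm)
    obtain rfl : j = j' := hL.index_eq hM (hj.trans hj'.symm)
    have hiA : A.card = i + 1 := hi ▸ hL.card_eq i
    have hjB : B.card = j + 1 := hj ▸ hL.card_eq j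
    refine Subtype.ext (hL.eq_of_growsRightAt_iff hM (Fin.lt_def.mpr (by omega)) (by omega)
      (hi.trans hi'.symm) (hj.trans hj'.symm) fun k hk hki => ?_)
    obtain ⟨y, hy⟩ := Fin.exists_succAbove_eq (x := ⟨k, by omega⟩) (y := p)
      (fun hkp => hki (by have := congrArg Fin.val hkp; simp only [p] at this; omega))
    simpa [bits, hy] using congrFun h y
  calc _ ≤ Nat.card (Fin (n - 3) → Bool) := Nat.card_le_card_of_injective _ bits_injective
    _ = 2 ^ (n - 3) := by simp

theorem stmt_13 (n : ℕ) [NeZero n] (hn : 3 ≤ n) (A B : Finset (ZMod n))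
    (hA : IsCyclicInterval n A) (hB : IsCyclicInterval n B) (hAB : A ⊂ B)
    (hAne : A ≠ ∅) (hBne : B ≠ Finset.univ) :
    Nat.card {L : Fin n → Finset (ZMod n) //
        IsIntervalChain n L ∧ (∃ i, L i = A) ∧ ∃ j, L j = B}
      ≤ 2 ^ (n - 3) :=
  stmt_13_general n A B hAB hBne
end

section
/- Let n ≥ 8 and define g(i) = C(n,i)·(n−i)/(n−i−1) for 0 ≤ i ≤ n−2. Then g attains its maximum on {1, ..., n−2} at i = ⌊(n+1)/2⌋, and g(i−1) < g(i) holds if and only if 1 ≤ i < n/2 + 1. -/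
theorem stmt_17 (n : ℕ) (hn : 8 ≤ n)
    (g : ℕ → ℚ) (hg : ∀ i, g i = (n.choose i : ℚ) * ((n : ℚ) - i) / ((n : ℚ) - i - 1)) :
    (∀ i, 1 ≤ i → i ≤ n - 2 → g i ≤ g ((n + 1) / 2)) ∧
    (∀ i, 1 ≤ i → i ≤ n - 2 → (g (i - 1) < g i ↔ (i : ℚ) < (n : ℚ) / 2 + 1)) := by
  have hstep : ∀ j : ℕ, j + 1 ≤ n - 2 → (g j < g (j + 1) ↔ 2 * j < n) := by
    intro j hj
    have hj3 : j + 3 ≤ n := by omega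
    have hj3' : (j : ℚ) + 3 ≤ n := by exact_mod_cast hj3
    have hd1 : (0 : ℚ) < (n : ℚ) - j - 1 := by linarith
    have hd2 : (0 : ℚ) < (n : ℚ) - (j + 1 : ℕ) - 1 := by push_cast; linarith
    have hjn : j ≤ n := by omega
    have hC : (n.choose (j + 1) : ℚ) * (j + 1) = (n.choose j : ℚ) * ((n : ℚ) - j) := by
      have h := Nat.choose_succ_right_eq n j
      have h2 : ((n.choose (j + 1) * (j + 1) : ℕ) : ℚ) = ((n.choose j * (n - j) : ℕ) : ℚ) := by
        exact_mod_cast congrArg (Nat.cast (R := ℚ)) h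
      rw [Nat.cast_mul, Nat.cast_mul, Nat.cast_sub hjn] at h2
      push_cast at h2 ⊢
      linarith
    have hCpos : (0 : ℚ) < (n.choose j : ℚ) := by
      exact_mod_cast Nat.choose_pos hjn
    have hCpos' : (0 : ℚ) < (n.choose (j + 1) : ℚ) := by
      exact_mod_cast Nat.choose_pos (by omega : j + 1 ≤ n)
    have hC2 : (n.choose (j+1):ℚ) * ((j:ℚ)+1) * ((n:ℚ)-(j:ℚ)-2)
        = (n.choose j:ℚ) * ((n:ℚ)-(j:ℚ)) * ((n:ℚ)-(j:ℚ)-2) := by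
      linear_combination ((n:ℚ)-(j:ℚ)-2) * hC
    have h8 : (8:ℚ) ≤ (n:ℚ) := by exact_mod_cast hn
    rw [hg j, hg (j + 1), div_lt_div_iff₀ hd1 hd2]
    push_cast
    constructor
    · intro h
      by_contra hc
      push_neg at hc
      have hc' : (n:ℚ) ≤ 2*(j:ℚ) := by exact_mod_cast hc
      have k1 : ((n:ℚ)-j-1)^2 ≤ ((j:ℚ)+1)*((n:ℚ)-j-2) := by
        nlinarith [mul_nonneg (by linarith : (0:ℚ) ≤ 2*(j:ℚ) - n)
          (by linarith : (0:ℚ) ≤ (n:ℚ) - j - 3)]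
      have A := mul_le_mul_of_nonneg_left k1 hCpos'.le
      nlinarith [A, hC2, h]
    · intro h
      have hc' : 2*(j:ℚ)+1 ≤ (n:ℚ) := by exact_mod_cast h
      have k1 : ((j:ℚ)+1)*((n:ℚ)-j-2) < ((n:ℚ)-j-1)^2 := by
        nlinarith [sq_nonneg (2*(n:ℚ)-4*(j:ℚ)-3),
          mul_nonneg (by positivity : (0:ℚ) ≤ (j:ℚ)) (by linarith : (0:ℚ) ≤ (n:ℚ)-2*j-1)]
      have A := mul_lt_mul_of_pos_left k1 hCpos'
      nlinarith [A, hC2]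
  set m := (n + 1) / 2 with hmdef
  have hm1 : 1 ≤ m := by omega
  have hm2 : m ≤ n - 2 := by omega
  have hm3 : n ≤ 2 * m := by omega
  have hm4 : 2 * m ≤ n + 1 := by omega
  have hup : ∀ k i, 1 ≤ i → i + k = m → g i ≤ g m := by
    intro k
    induction k with
    | zero => intro i h1 h2; simp at h2; rw [h2]
    | succ k ih =>
      intro i h1 h2
      have h3 : i + 1 ≤ n - 2 := by omega
      have h4 : 2 * i < n := by omega
      have h5 : g i < g (i + 1) := (hstep i h3).mpr h4
      exact le_of_lt (lt_of_lt_of_le h5 (ih (i + 1) (by omega) (by omega)))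
  have hdown : ∀ k, m + k ≤ n - 2 → g (m + k) ≤ g m := by
    intro k
    induction k with
    | zero => intro _; simp
    | succ k ih =>
      intro h
      have h3 : (m + k) + 1 ≤ n - 2 := by omega
      have h4 : ¬ (2 * (m + k) < n) := by omega
      have h5 : ¬ (g (m + k) < g (m + k + 1)) := fun hh => h4 ((hstep (m + k) h3).mp hh)
      push_neg at h5
      calc g (m + (k + 1)) = g ((m + k) + 1) := by ring_nf
        _ ≤ g (m + k) := h5
        _ ≤ g m := ih (by omega)
  constructor
  · intro i h1 h2
    rcases le_or_gt i m with h | h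
    · exact hup (m - i) i h1 (by omega)
    · have := hdown (i - m) (by omega)
      rwa [show m + (i - m) = i by omega] at this
  · intro i h1 h2
    obtain ⟨j, rfl⟩ : ∃ j, i = j + 1 := ⟨i - 1, by omega⟩
    rw [show j + 1 - 1 = j from rfl, hstep j h2]
    constructor
    · intro h
      have : (2 * j : ℚ) + 1 ≤ n := by exact_mod_cast h
      push_cast
      linarith
    · intro h
      push_cast at h
      have : (2 * j : ℚ) < n := by linarith
      exact_mod_cast this
end

section
/- Let n ≥ 3 and let F be a family of subsets of {1,...,n} containing ∅ and [n], with no four distinct members A, B, C, D satisfying A ∪ B ⊆ C ∩ D. Then F − {∅, [n]} is an antichain, and consequently |F| ≤ C(n, ⌊n/2⌋) + 2. -/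
/-!
Taking `A = ⊥` and `D = ⊤`, the forbidden configuration `A ∪ B ⊆ C ∩ D` becomes `B ⊆ C`, so any
two distinct comparable members of `F` other than `∅` and `[n]` would complete a forbidden
quadruple. Sperner's theorem then bounds what remains.
-/

theorem isAntichain_diff_bot_top {α : Type*} [Lattice α] [BoundedOrder α] {F : Set α}
    (hbot_mem : ⊥ ∈ F) (htop_mem : ⊤ ∈ F) (hbot_ne_top : (⊥ : α) ≠ ⊤)
    (hfree : ∀ A ∈ F, ∀ B ∈ F, ∀ C ∈ F, ∀ D ∈ F,
      A ≠ B → A ≠ C → A ≠ D → B ≠ C → B ≠ D → C ≠ D → ¬ (A ⊔ B ≤ C ⊓ D)) :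
    IsAntichain (· ≤ ·) (F \ {⊥, ⊤}) := by
  rintro B ⟨hBF, hB⟩ C ⟨hCF, hC⟩ hBC hle
  simp only [Set.mem_insert_iff, Set.mem_singleton_iff, not_or] at hB hC
  exact hfree ⊥ hbot_mem B hBF C hCF ⊤ htop_mem (Ne.symm hB.1) (Ne.symm hC.1) hbot_ne_top hBC
    hB.2 hC.2 (by simpa using hle)

theorem stmt_18 (n : ℕ) (hn : 3 ≤ n) (F : Finset (Finset (Fin n)))
    (hempty : ∅ ∈ F) (hfull : (Finset.univ : Finset (Fin n)) ∈ F)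
    (hstar : ∀ A ∈ F, ∀ B ∈ F, ∀ C ∈ F, ∀ D ∈ F,
      A ≠ B → A ≠ C → A ≠ D → B ≠ C → B ≠ D → C ≠ D → ¬ (A ∪ B ⊆ C ∩ D)) :
    IsAntichain (· ⊆ ·)
      ((F \ {∅, (Finset.univ : Finset (Fin n))} : Finset (Finset (Fin n))) :
        Set (Finset (Fin n)))
      ∧ F.card ≤ n.choose (n / 2) + 2 := by
  have : NeZero n := ⟨by omega⟩
  have hanti : IsAntichain (· ⊆ ·)
      ((F \ {∅, (Finset.univ : Finset (Fin n))} : Finset (Finset (Fin n))) :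
        Set (Finset (Fin n))) := by
    rw [Finset.coe_sdiff, Finset.coe_pair]
    exact isAntichain_diff_bot_top hempty hfull Finset.univ_nonempty.ne_empty.symm hstar
  have hsperner := hanti.sperner
  rw [Fintype.card_fin] at hsperner
  refine ⟨hanti, ?_⟩
  calc F.card ≤ (F \ {∅, Finset.univ}).card + ({∅, Finset.univ} : Finset (Finset (Fin n))).card :=
        Finset.card_le_card_sdiff_add_card
    _ ≤ n.choose (n / 2) + 2 := add_le_add hsperner Finset.card_le_two
end
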